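/- arXiv:1712.05592 — 2 statements merged into one kernel-verified Lean document; each statement's English description precedes it below -/
import Mathlib

section
/- In the cyclotomic generalized Varagnolo–Vasserot algebra V^β_{λ,m}, the elements y_1,…,y_n are nilpotent. -/
/-!
Formalization of definitions from:
L. Poulain d'Andecy and R. Walker, "Affine Hecke algebras and generalisations
of quiver Hecke algebras for type B".

Presented algebras are realized as `RingQuot` quotients of free algebras.
-/

open scoped BigOperators Classical

noncomputable section

namespace PdAW

variable {K : Type} [Field K]

/-! ### The eigenvalue sets `I_λ` and `S` -/

/-- `I_λ = {λ^ε q^{2t} : ε ∈ {±1}, t ∈ ℤ}`. -/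
def Iset (q lam : K) : Set K :=
  {x | ∃ ε : ℤ, (ε = 1 ∨ ε = -1) ∧ ∃ t : ℤ, x = lam ^ ε * q ^ (2 * t)}

/-- `S = I_{λ_1} ∪ ⋯ ∪ I_{λ_l}`. -/
def Sset {l : ℕ} (q : K) (lam : Fin l → K) : Set K := ⋃ a, Iset q (lam a)

/-! ### The Weyl group action on tuples -/

variable {n : ℕ}

/-- The simple transposition exchanging the (0-based) entries `c` and `c+1`. -/
def swapMove (c : ℕ) (h : c + 1 < n) (i : Fin n → K) : Fin n → K :=
  i ∘ Equiv.swap ⟨c, Nat.lt_of_succ_lt h⟩ ⟨c + 1, h⟩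

/-- The reflection `r_0`, inverting the first entry. -/
def invMove (h : 0 < n) (i : Fin n → K) : Fin n → K :=
  Function.update i ⟨0, h⟩ (i ⟨0, h⟩)⁻¹

/-- One step of the symmetric-group action. -/
def AStep (i j : Fin n → K) : Prop := ∃ c, ∃ h : c + 1 < n, j = swapMove c h i

/-- One step of the type-B Weyl group action. -/
def BStep (i j : Fin n → K) : Prop := AStep i j ∨ ∃ h : 0 < n, j = invMove h i

/-- `j` lies in the `W(B_n)`-orbit of `i`. -/
def inOrbitB (i j : Fin n → K) : Prop := Relation.ReflTransGen BStep i j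

/-- `β` is an orbit for the action of `W(B_n)`. -/
def IsBOrbit (β : Set (Fin n → K)) : Prop := ∃ i₀ ∈ β, β = {j | inOrbitB i₀ j}

/-- `α` is a union of orbits for the symmetric group action (i.e. is closed under it). -/
def IsAClosed (α : Set (Fin n → K)) : Prop :=
  ∀ i ∈ α, ∀ c, ∀ h : c + 1 < n, swapMove c h i ∈ α

theorem fin_lt (c : Fin (n - 1)) : c.1 + 1 < n := by have := c.2; omega

/-- The 0-based position of the paper's index `b ∈ {1,…,n-1}` (namely `b-1`). -/
def lo (c : Fin (n - 1)) : Fin n := ⟨c.1, Nat.lt_of_succ_lt (fin_lt c)⟩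

/-- The 0-based position `b` for the paper's index `b ∈ {1,…,n-1}`. -/
def hi (c : Fin (n - 1)) : Fin n := ⟨c.1 + 1, fin_lt c⟩

/-- The action of the simple reflection `r_{c+1}` on tuples. -/
def sw (c : Fin (n - 1)) (i : Fin n → K) : Fin n → K := swapMove c.1 (fin_lt c) i

/-! ### Quiver arrows (for the quiver with arrows `i → q²i`) -/

/-- `i → j` : `j = q²i ≠ q⁻²i`. -/
def qarr (q i j : K) : Prop := j = q ^ 2 * i ∧ j ≠ (q ^ 2)⁻¹ * i

/-- `i ← j` : `j = q⁻²i ≠ q²i`. -/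
def qbak (q i j : K) : Prop := j = (q ^ 2)⁻¹ * i ∧ j ≠ q ^ 2 * i

/-- `i ↔ j` : `j = q²i = q⁻²i`. -/
def qdbl (q i j : K) : Prop := j = q ^ 2 * i ∧ j = (q ^ 2)⁻¹ * i

/-- `i ↮ j` : `i ≠ j` and `j ∉ {q²i, q⁻²i}`. -/
def qnon (q i j : K) : Prop := i ≠ j ∧ j ≠ q ^ 2 * i ∧ j ≠ (q ^ 2)⁻¹ * i

/-- `i⁻¹ →ᵖ i` : `i ∈ {±p}` and `i ∉ {±p⁻¹}`. -/
def parr (p i : K) : Prop := (i = p ∨ i = -p) ∧ ¬(i = p⁻¹ ∨ i = -p⁻¹)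

/-- `i⁻¹ ←ᵖ i` : `i ∉ {±p}` and `i ∈ {±p⁻¹}`. -/
def pbak (p i : K) : Prop := ¬(i = p ∨ i = -p) ∧ (i = p⁻¹ ∨ i = -p⁻¹)

/-- `i⁻¹ ↔ᵖ i` : `i ∈ {±p} ∩ {±p⁻¹}`. -/
def pdbl (p i : K) : Prop := (i = p ∨ i = -p) ∧ (i = p⁻¹ ∨ i = -p⁻¹)

/-- `i⁻¹ ↮ᵖ i` : `i ≠ i⁻¹` and `i ∉ {±p, ±p⁻¹}`. -/
def pnon (p i : K) : Prop := i ≠ i⁻¹ ∧ ¬(i = p ∨ i = -p ∨ i = p⁻¹ ∨ i = -p⁻¹)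

/-- The product `∏_{λ ∈ I} (x - λ)^{m(λ)}` (the factors pairwise commute). -/
def polyProd {A : Type} [Ring A] [Algebra K A] (x : A) (I : Finset K) (m : K → ℕ) : A :=
  I.noncommProd (fun lam => (x - algebraMap K A lam) ^ m lam) (by
    intro a _ b _ _
    have h1 : Commute x (algebraMap K A b) := (Algebra.commutes b x).symm
    have h2 : Commute (algebraMap K A a) x := Algebra.commutes a x
    have h3 : Commute (algebraMap K A a) (algebraMap K A b) := Algebra.commutes a _
    exact (((Commute.refl x).sub_right h1).sub_left (h2.sub_right h3)).pow_pow _ _)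

/-! ### The affine Hecke algebra of type A and its cyclotomic quotients -/

/-- Generators of the affine Hecke algebra `Ĥ(A_n)`:
`g c` is the paper's `g_{c+1}` (`c+1 ∈ {1,…,n-1}`), `X k` is `X_{k+1}`, `Xinv k` is `X_{k+1}⁻¹`. -/
inductive AGen (n : ℕ) : Type
  | g : Fin (n - 1) → AGen n
  | X : Fin n → AGen n
  | Xinv : Fin n → AGen n

def ag (c : Fin (n - 1)) : FreeAlgebra K (AGen n) := FreeAlgebra.ι K (AGen.g c)
def aX (k : Fin n) : FreeAlgebra K (AGen n) := FreeAlgebra.ι K (AGen.X k)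
def aXi (k : Fin n) : FreeAlgebra K (AGen n) := FreeAlgebra.ι K (AGen.Xinv k)

/-- Defining relations of the affine Hecke algebra `Ĥ(A_n)`. -/
inductive HARel (q : K) (n : ℕ) : FreeAlgebra K (AGen n) → FreeAlgebra K (AGen n) → Prop
  | quad (c : Fin (n - 1)) : HARel q n (ag c * ag c) ((q - q⁻¹) • ag c + 1)
  | braid (c c' : Fin (n - 1)) (h : c'.1 = c.1 + 1) :
      HARel q n (ag c * ag c' * ag c) (ag c' * ag c * ag c')
  | gcomm (c c' : Fin (n - 1)) (h : c.1 + 1 < c'.1) :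
      HARel q n (ag c * ag c') (ag c' * ag c)
  | Xcomm (k l : Fin n) : HARel q n (aX k * aX l) (aX l * aX k)
  | Xunit (k : Fin n) : HARel q n (aX k * aXi k) 1
  | Xunit' (k : Fin n) : HARel q n (aXi k * aX k) 1
  | gXg (c : Fin (n - 1)) : HARel q n (ag c * aX (lo c) * ag c) (aX (hi c))
  | gX (c : Fin (n - 1)) (k : Fin n) (h : k ≠ lo c ∧ k ≠ hi c) :
      HARel q n (ag c * aX k) (aX k * ag c)

/-- The affine Hecke algebra `Ĥ(A_n)`. -/
abbrev HeckeA (q : K) (n : ℕ) : Type := RingQuot (HARel q n)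

/-- Defining relations of the cyclotomic quotient `H(A_n)_{λ,m}`. -/
inductive HAcRel (q : K) (n : ℕ) (m : K →₀ ℕ) :
    FreeAlgebra K (AGen n) → FreeAlgebra K (AGen n) → Prop
  | ofA {a b : FreeAlgebra K (AGen n)} (h : HARel q n a b) : HAcRel q n m a b
  | cyc (h0 : 0 < n) : HAcRel q n m (polyProd (aX ⟨0, h0⟩) m.support ⇑m) 0

/-- The cyclotomic quotient `H(A_n)_{λ,m}`. -/
abbrev HeckeAc (q : K) (n : ℕ) (m : K →₀ ℕ) : Type := RingQuot (HAcRel q n m)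

/-! ### The affine Hecke algebra of type B and its cyclotomic quotients -/

inductive BGen (n : ℕ) : Type
  | g0 : BGen n
  | g : Fin (n - 1) → BGen n
  | X : Fin n → BGen n
  | Xinv : Fin n → BGen n

def bg0 : FreeAlgebra K (BGen n) := FreeAlgebra.ι K BGen.g0
def bg (c : Fin (n - 1)) : FreeAlgebra K (BGen n) := FreeAlgebra.ι K (BGen.g c)
def bX (k : Fin n) : FreeAlgebra K (BGen n) := FreeAlgebra.ι K (BGen.X k)
def bXi (k : Fin n) : FreeAlgebra K (BGen n) := FreeAlgebra.ι K (BGen.Xinv k)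

/-- Defining relations of the affine Hecke algebra `Ĥ(B_n)`. -/
inductive HBRel (p q : K) (n : ℕ) : FreeAlgebra K (BGen n) → FreeAlgebra K (BGen n) → Prop
  | quad0 : HBRel p q n (bg0 * bg0) ((p - p⁻¹) • bg0 + 1)
  | quad (c : Fin (n - 1)) : HBRel p q n (bg c * bg c) ((q - q⁻¹) • bg c + 1)
  | braid0 (h : 0 < n - 1) :
      HBRel p q n (bg0 * bg ⟨0, h⟩ * bg0 * bg ⟨0, h⟩) (bg ⟨0, h⟩ * bg0 * bg ⟨0, h⟩ * bg0)
  | braid (c c' : Fin (n - 1)) (h : c'.1 = c.1 + 1) :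
      HBRel p q n (bg c * bg c' * bg c) (bg c' * bg c * bg c')
  | gcomm (c c' : Fin (n - 1)) (h : c.1 + 1 < c'.1) :
      HBRel p q n (bg c * bg c') (bg c' * bg c)
  | g0comm (c : Fin (n - 1)) (h : 1 ≤ c.1) : HBRel p q n (bg0 * bg c) (bg c * bg0)
  | Xcomm (k l : Fin n) : HBRel p q n (bX k * bX l) (bX l * bX k)
  | Xunit (k : Fin n) : HBRel p q n (bX k * bXi k) 1
  | Xunit' (k : Fin n) : HBRel p q n (bXi k * bX k) 1
  | g0Xg0 (h0 : 0 < n) : HBRel p q n (bg0 * bXi ⟨0, h0⟩ * bg0) (bX ⟨0, h0⟩)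
  | gXg (c : Fin (n - 1)) : HBRel p q n (bg c * bX (lo c) * bg c) (bX (hi c))
  | gX (c : Fin (n - 1)) (k : Fin n) (h : k ≠ lo c ∧ k ≠ hi c) :
      HBRel p q n (bg c * bX k) (bX k * bg c)
  | g0X (k : Fin n) (h : k.1 ≠ 0) : HBRel p q n (bg0 * bX k) (bX k * bg0)

/-- The affine Hecke algebra `Ĥ(B_n)`. -/
abbrev HeckeB (p q : K) (n : ℕ) : Type := RingQuot (HBRel p q n)

/-- Defining relations of the cyclotomic quotient `H(B_n)_{λ,m}`. -/
inductive HBcRel (p q : K) (n : ℕ) (m : K →₀ ℕ) :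
    FreeAlgebra K (BGen n) → FreeAlgebra K (BGen n) → Prop
  | ofB {a b : FreeAlgebra K (BGen n)} (h : HBRel p q n a b) : HBcRel p q n m a b
  | cyc (h0 : 0 < n) : HBcRel p q n m (polyProd (bX ⟨0, h0⟩) m.support ⇑m) 0

/-- The cyclotomic quotient `H(B_n)_{λ,m}`. -/
abbrev HeckeBc (p q : K) (n : ℕ) (m : K →₀ ℕ) : Type := RingQuot (HBcRel p q n m)

/-! ### Spectral idempotent families and corner (block) algebras -/

/-- The characterizing properties of the family of idempotents `e^H(i)` projecting onto
the common generalized eigenspaces of commuting elements `Xs k` (acting by left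
multiplication): they are orthogonal idempotents summing to `1`, commuting with the
`Xs k`, with `(Xs k - i_k)` nilpotent on `E i`.  Such a family is unique. -/
def IsSpectralFamily {A : Type} [Ring A] [Algebra K A] (Xs : Fin n → A)
    (T : Finset (Fin n → K)) (E : (Fin n → K) → A) : Prop :=
  (∀ i, i ∉ T → E i = 0) ∧ (∑ i ∈ T, E i = 1) ∧
  (∀ i, E i * E i = E i) ∧ (∀ i j, i ≠ j → E i * E j = 0) ∧
  (∀ i k, Xs k * E i = E i * Xs k) ∧
  (∀ i ∈ T, ∀ k : Fin n, ∃ N : ℕ, 0 < N ∧ (Xs k - algebraMap K A (i k)) ^ N * E i = 0)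

/-- Relation identifying a central idempotent `e` with `1`. -/
def cornerRel {A : Type} [Ring A] (e : A) : A → A → Prop := fun x y => x = e ∧ y = 1

/-- For a central idempotent `e` of `A`, the corner algebra `eA` realized as the
quotient of `A` by the relation `e = 1`. -/
abbrev Corner (A : Type) [Ring A] (e : A) : Type := RingQuot (cornerRel e)

/-- Canonical algebra map `A → eA`. -/
def cornerMk {A : Type} [Ring A] [Algebra K A] (e : A) : A →ₐ[K] Corner A e :=
  RingQuot.mkAlgHom K (cornerRel e)

/-! ### Cyclotomic KLR algebras (type A quiver Hecke algebras) -/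

/-- Generators of the KLR algebra: `psi c` is the paper's `ψ_{c+1}`, `y k` is `y_{k+1}`,
`e i` for `i` in the index set `α`. -/
inductive RGen (K : Type) (n : ℕ) (α : Finset (Fin n → K)) : Type
  | psi : Fin (n - 1) → RGen K n α
  | y : Fin n → RGen K n α
  | e : {x // x ∈ α} → RGen K n α

def rψ {α : Finset (Fin n → K)} (c : Fin (n - 1)) : FreeAlgebra K (RGen K n α) :=
  FreeAlgebra.ι K (RGen.psi c)
def ry {α : Finset (Fin n → K)} (k : Fin n) : FreeAlgebra K (RGen K n α) :=
  FreeAlgebra.ι K (RGen.y k)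
def re {α : Finset (Fin n → K)} (i : {x // x ∈ α}) : FreeAlgebra K (RGen K n α) :=
  FreeAlgebra.ι K (RGen.e i)

/-- Defining relations of the cyclotomic KLR algebra `R^α_{λ,m}`. -/
inductive RRel (q : K) (n : ℕ) (α : Finset (Fin n → K)) (m : K →₀ ℕ) :
    FreeAlgebra K (RGen K n α) → FreeAlgebra K (RGen K n α) → Prop
  | esum : RRel q n α m (∑ i ∈ α.attach, re i) 1
  | eidem (i) : RRel q n α m (re i * re i) (re i)
  | eorth (i j) (h : i ≠ j) : RRel q n α m (re i * re j) 0
  | ycomm (k l : Fin n) : RRel q n α m (ry k * ry l) (ry l * ry k)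
  | ye (k : Fin n) (i) : RRel q n α m (ry k * re i) (re i * ry k)
  | psiE (c : Fin (n - 1)) (i : {x // x ∈ α}) (h' : sw c i.1 ∈ α) :
      RRel q n α m (rψ c * re i) (re ⟨sw c i.1, h'⟩ * rψ c)
  | psiyB (c : Fin (n - 1)) (i) (h : i.1 (lo c) = i.1 (hi c)) :
      RRel q n α m ((rψ c * ry (lo c) - ry (hi c) * rψ c) * re i) (-re i)
  | psiyB1 (c : Fin (n - 1)) (i) (h : i.1 (lo c) = i.1 (hi c)) :
      RRel q n α m ((rψ c * ry (hi c) - ry (lo c) * rψ c) * re i) (re i)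
  | psiyO (c : Fin (n - 1)) (i) (j : Fin n)
      (h : i.1 (lo c) ≠ i.1 (hi c) ∨ (j ≠ lo c ∧ j ≠ hi c)) :
      RRel q n α m ((rψ c * ry j - ry (Equiv.swap (lo c) (hi c) j) * rψ c) * re i) 0
  | psicomm (c c' : Fin (n - 1)) (h : c.1 + 1 < c'.1) :
      RRel q n α m (rψ c * rψ c') (rψ c' * rψ c)
  | sqEq (c : Fin (n - 1)) (i) (h : i.1 (lo c) = i.1 (hi c)) :
      RRel q n α m (rψ c * rψ c * re i) 0
  | sqNon (c : Fin (n - 1)) (i) (h : qnon q (i.1 (lo c)) (i.1 (hi c))) :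
      RRel q n α m (rψ c * rψ c * re i) (re i)
  | sqArr (c : Fin (n - 1)) (i) (h : qarr q (i.1 (lo c)) (i.1 (hi c))) :
      RRel q n α m (rψ c * rψ c * re i) ((ry (hi c) - ry (lo c)) * re i)
  | sqBak (c : Fin (n - 1)) (i) (h : qbak q (i.1 (lo c)) (i.1 (hi c))) :
      RRel q n α m (rψ c * rψ c * re i) ((ry (lo c) - ry (hi c)) * re i)
  | sqDbl (c : Fin (n - 1)) (i) (h : qdbl q (i.1 (lo c)) (i.1 (hi c))) :
      RRel q n α m (rψ c * rψ c * re i) ((ry (hi c) - ry (lo c)) * ((ry (lo c) - ry (hi c)) * re i))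
  | brArr (c c' : Fin (n - 1)) (hcc : c'.1 = c.1 + 1) (i) (h1 : i.1 (lo c) = i.1 (hi c'))
      (h2 : qarr q (i.1 (lo c)) (i.1 (hi c))) :
      RRel q n α m ((rψ c * rψ c' * rψ c - rψ c' * rψ c * rψ c') * re i) (re i)
  | brBak (c c' : Fin (n - 1)) (hcc : c'.1 = c.1 + 1) (i) (h1 : i.1 (lo c) = i.1 (hi c'))
      (h2 : qbak q (i.1 (lo c)) (i.1 (hi c))) :
      RRel q n α m ((rψ c * rψ c' * rψ c - rψ c' * rψ c * rψ c') * re i) (-re i)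
  | brDbl (c c' : Fin (n - 1)) (hcc : c'.1 = c.1 + 1) (i) (h1 : i.1 (lo c) = i.1 (hi c'))
      (h2 : qdbl q (i.1 (lo c)) (i.1 (hi c))) :
      RRel q n α m ((rψ c * rψ c' * rψ c - rψ c' * rψ c * rψ c') * re i)
        ((ry (hi c') + ry (lo c) - ry (hi c) - ry (hi c)) * re i)
  | brEls (c c' : Fin (n - 1)) (hcc : c'.1 = c.1 + 1) (i)
      (h : ¬(i.1 (lo c) = i.1 (hi c') ∧ (qarr q (i.1 (lo c)) (i.1 (hi c)) ∨
            qbak q (i.1 (lo c)) (i.1 (hi c)) ∨ qdbl q (i.1 (lo c)) (i.1 (hi c))))) :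
      RRel q n α m ((rψ c * rψ c' * rψ c - rψ c' * rψ c * rψ c') * re i) 0
  | cyc (i) (h0 : 0 < n) :
      RRel q n α m (ry ⟨0, h0⟩ ^ m (i.1 ⟨0, h0⟩) * re i) 0

/-- The cyclotomic KLR algebra `R^α_{λ,m}`. -/
abbrev KLR (q : K) (n : ℕ) (α : Finset (Fin n → K)) (m : K →₀ ℕ) : Type :=
  RingQuot (RRel q n α m)

/-! ### The generalized Varagnolo–Vasserot algebras `V^β_λ` and cyclotomic quotients -/

inductive VGen (K : Type) (n : ℕ) (β : Finset (Fin n → K)) : Type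
  | psi0 : VGen K n β
  | psi : Fin (n - 1) → VGen K n β
  | y : Fin n → VGen K n β
  | e : {x // x ∈ β} → VGen K n β

def vψ0 {β : Finset (Fin n → K)} : FreeAlgebra K (VGen K n β) := FreeAlgebra.ι K VGen.psi0
def vψ {β : Finset (Fin n → K)} (c : Fin (n - 1)) : FreeAlgebra K (VGen K n β) :=
  FreeAlgebra.ι K (VGen.psi c)
def vy {β : Finset (Fin n → K)} (k : Fin n) : FreeAlgebra K (VGen K n β) :=
  FreeAlgebra.ι K (VGen.y k)
def ve {β : Finset (Fin n → K)} (i : {x // x ∈ β}) : FreeAlgebra K (VGen K n β) :=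
  FreeAlgebra.ι K (VGen.e i)

/-- Case conditions appearing in the four-term relation (Rel:V11). -/
def c4a (q i1 i2 : K) : Prop := i1⁻¹ ≠ i1 ∧ qarr q i1 i2 ∧ i2⁻¹ = i2
def c4b (q i1 i2 : K) : Prop := i1⁻¹ ≠ i1 ∧ qbak q i1 i2 ∧ i2⁻¹ = i2
def c4c (q i1 i2 : K) : Prop := i1⁻¹ = i1 ∧ qdbl q i1 i2 ∧ i2⁻¹ = i2
def c4d (p i1 i2 : K) : Prop := i2 ≠ i1 ∧ pbak p i1⁻¹ ∧ i1⁻¹ = i2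
def c4e (p i1 i2 : K) : Prop := i2 ≠ i1 ∧ parr p i1⁻¹ ∧ i1⁻¹ = i2
def c4f (p i1 i2 : K) : Prop := i2 ≠ i1 ∧ pdbl p i1⁻¹ ∧ i1⁻¹ = i2

/-- `((ψ_0ψ_1)² - (ψ_1ψ_0)²) e(i)`. -/
def vfour {β : Finset (Fin n → K)} (h2 : 1 < n) (i : {x // x ∈ β}) :
    FreeAlgebra K (VGen K n β) :=
  (vψ0 * vψ ⟨0, by omega⟩ * vψ0 * vψ ⟨0, by omega⟩ -
    vψ ⟨0, by omega⟩ * vψ0 * vψ ⟨0, by omega⟩ * vψ0) * ve i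

/-- Defining relations of the cyclotomic quotient `V^β_{λ,m}` of the generalized
Varagnolo–Vasserot algebra (Definition 2.1 of the paper, plus the cyclotomic relation). -/
inductive VRel (p q : K) (n : ℕ) (β : Finset (Fin n → K)) (m : K →₀ ℕ) :
    FreeAlgebra K (VGen K n β) → FreeAlgebra K (VGen K n β) → Prop
  | esum : VRel p q n β m (∑ i ∈ β.attach, ve i) 1
  | eidem (i) : VRel p q n β m (ve i * ve i) (ve i)
  | eorth (i j) (h : i ≠ j) : VRel p q n β m (ve i * ve j) 0
  | ycomm (k l : Fin n) : VRel p q n β m (vy k * vy l) (vy l * vy k)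
  | ye (k : Fin n) (i) : VRel p q n β m (vy k * ve i) (ve i * vy k)
  | psiE (c : Fin (n - 1)) (i : {x // x ∈ β}) (h' : sw c i.1 ∈ β) :
      VRel p q n β m (vψ c * ve i) (ve ⟨sw c i.1, h'⟩ * vψ c)
  | psi0E (i : {x // x ∈ β}) (h0 : 0 < n) (h' : invMove h0 i.1 ∈ β) :
      VRel p q n β m (vψ0 * ve i) (ve ⟨invMove h0 i.1, h'⟩ * vψ0)
  | psiyB (c : Fin (n - 1)) (i) (h : i.1 (lo c) = i.1 (hi c)) :
      VRel p q n β m ((vψ c * vy (lo c) - vy (hi c) * vψ c) * ve i) (-ve i)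
  | psiyB1 (c : Fin (n - 1)) (i) (h : i.1 (lo c) = i.1 (hi c)) :
      VRel p q n β m ((vψ c * vy (hi c) - vy (lo c) * vψ c) * ve i) (ve i)
  | psiyO (c : Fin (n - 1)) (i) (j : Fin n)
      (h : i.1 (lo c) ≠ i.1 (hi c) ∨ (j ≠ lo c ∧ j ≠ hi c)) :
      VRel p q n β m ((vψ c * vy j - vy (Equiv.swap (lo c) (hi c) j) * vψ c) * ve i) 0
  | psicomm (c c' : Fin (n - 1)) (h : c.1 + 1 < c'.1) :
      VRel p q n β m (vψ c * vψ c') (vψ c' * vψ c)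
  | psicomm0 (c : Fin (n - 1)) (h : 1 ≤ c.1) : VRel p q n β m (vψ0 * vψ c) (vψ c * vψ0)
  | sqEq (c : Fin (n - 1)) (i) (h : i.1 (lo c) = i.1 (hi c)) :
      VRel p q n β m (vψ c * vψ c * ve i) 0
  | sqNon (c : Fin (n - 1)) (i) (h : qnon q (i.1 (lo c)) (i.1 (hi c))) :
      VRel p q n β m (vψ c * vψ c * ve i) (ve i)
  | sqArr (c : Fin (n - 1)) (i) (h : qarr q (i.1 (lo c)) (i.1 (hi c))) :
      VRel p q n β m (vψ c * vψ c * ve i) ((vy (hi c) - vy (lo c)) * ve i)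
  | sqBak (c : Fin (n - 1)) (i) (h : qbak q (i.1 (lo c)) (i.1 (hi c))) :
      VRel p q n β m (vψ c * vψ c * ve i) ((vy (lo c) - vy (hi c)) * ve i)
  | sqDbl (c : Fin (n - 1)) (i) (h : qdbl q (i.1 (lo c)) (i.1 (hi c))) :
      VRel p q n β m (vψ c * vψ c * ve i) ((vy (hi c) - vy (lo c)) * ((vy (lo c) - vy (hi c)) * ve i))
  | brArr (c c' : Fin (n - 1)) (hcc : c'.1 = c.1 + 1) (i) (h1 : i.1 (lo c) = i.1 (hi c'))
      (h2 : qarr q (i.1 (lo c)) (i.1 (hi c))) :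
      VRel p q n β m ((vψ c * vψ c' * vψ c - vψ c' * vψ c * vψ c') * ve i) (ve i)
  | brBak (c c' : Fin (n - 1)) (hcc : c'.1 = c.1 + 1) (i) (h1 : i.1 (lo c) = i.1 (hi c'))
      (h2 : qbak q (i.1 (lo c)) (i.1 (hi c))) :
      VRel p q n β m ((vψ c * vψ c' * vψ c - vψ c' * vψ c * vψ c') * ve i) (-ve i)
  | brDbl (c c' : Fin (n - 1)) (hcc : c'.1 = c.1 + 1) (i) (h1 : i.1 (lo c) = i.1 (hi c'))
      (h2 : qdbl q (i.1 (lo c)) (i.1 (hi c))) :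
      VRel p q n β m ((vψ c * vψ c' * vψ c - vψ c' * vψ c * vψ c') * ve i)
        ((vy (hi c') + vy (lo c) - vy (hi c) - vy (hi c)) * ve i)
  | brEls (c c' : Fin (n - 1)) (hcc : c'.1 = c.1 + 1) (i)
      (h : ¬(i.1 (lo c) = i.1 (hi c') ∧ (qarr q (i.1 (lo c)) (i.1 (hi c)) ∨
            qbak q (i.1 (lo c)) (i.1 (hi c)) ∨ qdbl q (i.1 (lo c)) (i.1 (hi c))))) :
      VRel p q n β m ((vψ c * vψ c' * vψ c - vψ c' * vψ c * vψ c') * ve i) 0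
  | psi0yNe (i) (h0 : 0 < n) (h : (i.1 ⟨0, h0⟩)⁻¹ ≠ i.1 ⟨0, h0⟩) :
      VRel p q n β m ((vψ0 * vy ⟨0, h0⟩ + vy ⟨0, h0⟩ * vψ0) * ve i) 0
  | psi0yEq (i) (h0 : 0 < n) (h : (i.1 ⟨0, h0⟩)⁻¹ = i.1 ⟨0, h0⟩) :
      VRel p q n β m ((vψ0 * vy ⟨0, h0⟩ + vy ⟨0, h0⟩ * vψ0) * ve i) (ve i + ve i)
  | psi0yO (k : Fin n) (h : k.1 ≠ 0) : VRel p q n β m (vψ0 * vy k) (vy k * vψ0)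
  | sq0Eq (i) (h0 : 0 < n) (h : (i.1 ⟨0, h0⟩)⁻¹ = i.1 ⟨0, h0⟩) :
      VRel p q n β m (vψ0 * vψ0 * ve i) 0
  | sq0Non (i) (h0 : 0 < n) (h : pnon p (i.1 ⟨0, h0⟩)) :
      VRel p q n β m (vψ0 * vψ0 * ve i) (ve i)
  | sq0Arr (i) (h0 : 0 < n) (h : parr p (i.1 ⟨0, h0⟩)) :
      VRel p q n β m (vψ0 * vψ0 * ve i) (vy ⟨0, h0⟩ * ve i)
  | sq0Bak (i) (h0 : 0 < n) (h : pbak p (i.1 ⟨0, h0⟩)) :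
      VRel p q n β m (vψ0 * vψ0 * ve i) (-(vy ⟨0, h0⟩ * ve i))
  | sq0Dbl (i) (h0 : 0 < n) (h : pdbl p (i.1 ⟨0, h0⟩)) :
      VRel p q n β m (vψ0 * vψ0 * ve i) (-(vy ⟨0, h0⟩ * (vy ⟨0, h0⟩ * ve i)))
  | fourA (i) (h2 : 1 < n) (h : c4a q (i.1 ⟨0, Nat.lt_of_succ_lt h2⟩) (i.1 ⟨1, h2⟩)) :
      VRel p q n β m (vfour h2 i) ((2 : K) • (vψ0 * ve i))
  | fourB (i) (h2 : 1 < n) (h : c4b q (i.1 ⟨0, Nat.lt_of_succ_lt h2⟩) (i.1 ⟨1, h2⟩)) :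
      VRel p q n β m (vfour h2 i) (-((2 : K) • (vψ0 * ve i)))
  | fourC (i) (h2 : 1 < n) (h : c4c q (i.1 ⟨0, Nat.lt_of_succ_lt h2⟩) (i.1 ⟨1, h2⟩)) :
      VRel p q n β m (vfour h2 i) ((4 : K) • ((vψ0 * vy ⟨0, Nat.lt_of_succ_lt h2⟩ - 1) * ve i))
  | fourD (i) (h2 : 1 < n) (h : c4d p (i.1 ⟨0, Nat.lt_of_succ_lt h2⟩) (i.1 ⟨1, h2⟩)) :
      VRel p q n β m (vfour h2 i) (-(vψ ⟨0, by omega⟩ * ve i))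
  | fourE (i) (h2 : 1 < n) (h : c4e p (i.1 ⟨0, Nat.lt_of_succ_lt h2⟩) (i.1 ⟨1, h2⟩)) :
      VRel p q n β m (vfour h2 i) (vψ ⟨0, by omega⟩ * ve i)
  | fourF (i) (h2 : 1 < n) (h : c4f p (i.1 ⟨0, Nat.lt_of_succ_lt h2⟩) (i.1 ⟨1, h2⟩)) :
      VRel p q n β m (vfour h2 i)
        (vψ ⟨0, by omega⟩ * ((vy ⟨0, Nat.lt_of_succ_lt h2⟩ - vy ⟨1, h2⟩) * ve i))
  | fourG (i) (h2 : 1 < n)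
      (h : ¬c4a q (i.1 ⟨0, Nat.lt_of_succ_lt h2⟩) (i.1 ⟨1, h2⟩) ∧
           ¬c4b q (i.1 ⟨0, Nat.lt_of_succ_lt h2⟩) (i.1 ⟨1, h2⟩) ∧
           ¬c4c q (i.1 ⟨0, Nat.lt_of_succ_lt h2⟩) (i.1 ⟨1, h2⟩) ∧
           ¬c4d p (i.1 ⟨0, Nat.lt_of_succ_lt h2⟩) (i.1 ⟨1, h2⟩) ∧
           ¬c4e p (i.1 ⟨0, Nat.lt_of_succ_lt h2⟩) (i.1 ⟨1, h2⟩) ∧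
           ¬c4f p (i.1 ⟨0, Nat.lt_of_succ_lt h2⟩) (i.1 ⟨1, h2⟩)) :
      VRel p q n β m (vfour h2 i) 0
  | cyc (i) (h0 : 0 < n) :
      VRel p q n β m (vy ⟨0, h0⟩ ^ m (i.1 ⟨0, h0⟩) * ve i) 0

/-- The cyclotomic quotient `V^β_{λ,m}` of the generalized Varagnolo–Vasserot algebra. -/
abbrev VB (p q : K) (n : ℕ) (β : Finset (Fin n → K)) (m : K →₀ ℕ) : Type :=
  RingQuot (VRel p q n β m)

/-! ### Laurent monomials and the intermediary algebras `𝕀_{N,A}` and `𝕀_N` -/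

/-- Given elements `X k` with formal inverses `Xi k`, the monomial `X^x` for `x ∈ ℤ^n`. -/
def XmonOf {F : Type} [Monoid F] (X Xi : Fin n → F) (x : Fin n → ℤ) : F :=
  ((List.finRange n).map fun k => if 0 ≤ x k then X k ^ (x k).toNat
    else Xi k ^ (-x k).toNat).prod

/-- The Laurent polynomial `(X^x - X^{x - tα})/(1 - X^{-α})` (a geometric sum). -/
def divMonOf {F : Type} [Ring F] (X Xi : Fin n → F) (x αv : Fin n → ℤ) (t : ℤ) : F :=
  if 0 ≤ t then ∑ j ∈ Finset.range t.toNat, XmonOf X Xi (x - (j : ℤ) • αv)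
  else -∑ j ∈ Finset.range (-t).toNat, XmonOf X Xi (x + ((j : ℤ) + 1) • αv)

/-- The root `α_b = ε_{b+1} - ε_b` as an exponent vector. -/
def alC (c : Fin (n - 1)) : Fin n → ℤ := fun k => if k = hi c then 1 else if k = lo c then -1 else 0

/-- The root `α_0 = 2ε_1` as an exponent vector. -/
def alB : Fin n → ℤ := fun k => if k.1 = 0 then 2 else 0

/-- Action of `r_0` on exponent vectors. -/
def rx0 (x : Fin n → ℤ) : Fin n → ℤ := fun k => if k.1 = 0 then -x k else x k

/-- Action of the simple transposition `r_{c+1}` on exponent vectors. -/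
def rxC (c : Fin (n - 1)) (x : Fin n → ℤ) : Fin n → ℤ := x ∘ Equiv.swap (lo c) (hi c)

/-- `-α_1` as an exponent vector (so `X^{-α_1} = X_1X_2⁻¹`). -/
def mA1 : Fin n → ℤ := fun k => if k.1 = 0 then 1 else if k.1 = 1 then -1 else 0
/-- `-r_0(α_1)` as an exponent vector (so `X^{-r_0(α_1)} = X_1⁻¹X_2⁻¹`). -/
def mR0A1 : Fin n → ℤ := fun k => if k.1 = 0 then -1 else if k.1 = 1 then -1 else 0
/-- `-r_1(α_0)` as an exponent vector (so `X^{-r_1(α_0)} = X_2⁻²`). -/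
def mR1A0 : Fin n → ℤ := fun k => if k.1 = 1 then -2 else 0
/-- `-α_0` as an exponent vector (so `X^{-α_0} = X_1⁻²`). -/
def mA0 : Fin n → ℤ := fun k => if k.1 = 0 then -2 else 0

/-- Generators of the intermediary algebra `𝕀_{N,A}` of Section 5 (restricted to type A). -/
inductive IAGen (K : Type) (n : ℕ) (α : Finset (Fin n → K)) : Type
  | phi : Fin (n - 1) → IAGen K n α
  | X : Fin n → IAGen K n α
  | Xinv : Fin n → IAGen K n α
  | e : {x // x ∈ α} → IAGen K n α

def tφ {α : Finset (Fin n → K)} (c : Fin (n - 1)) : FreeAlgebra K (IAGen K n α) :=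
  FreeAlgebra.ι K (IAGen.phi c)
def tX {α : Finset (Fin n → K)} (k : Fin n) : FreeAlgebra K (IAGen K n α) :=
  FreeAlgebra.ι K (IAGen.X k)
def tXi {α : Finset (Fin n → K)} (k : Fin n) : FreeAlgebra K (IAGen K n α) :=
  FreeAlgebra.ι K (IAGen.Xinv k)
def te {α : Finset (Fin n → K)} (i : {x // x ∈ α}) : FreeAlgebra K (IAGen K n α) :=
  FreeAlgebra.ι K (IAGen.e i)

/-- The "commutative part" of the relations of `𝕀_{N,A}`: relations among the `X`'s and
the idempotents `e(i)`, including the cyclotomic relation `(X_1 - i_1)^{m(i_1)}e(i) = 0`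
and the nilpotency relations `(X_k - i_k)^N e(i) = 0` for `k ≥ 2`. -/
inductive XARel (n : ℕ) (α : Finset (Fin n → K)) (m : K →₀ ℕ) (N : ℕ) :
    FreeAlgebra K (IAGen K n α) → FreeAlgebra K (IAGen K n α) → Prop
  | Xcomm (k l : Fin n) : XARel n α m N (tX k * tX l) (tX l * tX k)
  | Xunit (k : Fin n) : XARel n α m N (tX k * tXi k) 1
  | Xunit' (k : Fin n) : XARel n α m N (tXi k * tX k) 1
  | esum : XARel n α m N (∑ i ∈ α.attach, te i) 1
  | eidem (i) : XARel n α m N (te i * te i) (te i)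
  | eorth (i j) (h : i ≠ j) : XARel n α m N (te i * te j) 0
  | Xe (k : Fin n) (i) : XARel n α m N (tX k * te i) (te i * tX k)
  | cyc (i) (h0 : 0 < n) :
      XARel n α m N ((tX ⟨0, h0⟩ - algebraMap K (FreeAlgebra K (IAGen K n α)) (i.1 ⟨0, h0⟩)) ^
        m (i.1 ⟨0, h0⟩) * te i) 0
  | nil (i) (k : Fin n) (h : k.1 ≠ 0) :
      XARel n α m N ((tX k - algebraMap K (FreeAlgebra K (IAGen K n α)) (i.1 k)) ^ N * te i) 0

/-- Defining relations of the intermediary algebra `𝕀_{N,A}`.  Partial inverses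
`(⋯)⁻¹e(i)` appearing in the relations of Definition 5.1 are handled by quantifying over
all elements `Z` which invert the relevant denominator `e(i)`-locally, modulo the
commutative relations `XARel` (such a `Z` exists and its class is unique, by the
nilpotency relations). -/
inductive IARel (q : K) (n : ℕ) (α : Finset (Fin n → K)) (m : K →₀ ℕ) (N : ℕ) :
    FreeAlgebra K (IAGen K n α) → FreeAlgebra K (IAGen K n α) → Prop
  | ofX {a b : FreeAlgebra K (IAGen K n α)} (h : XARel n α m N a b) : IARel q n α m N a b
  | phiE (c : Fin (n - 1)) (i : {x // x ∈ α}) (h' : sw c i.1 ∈ α) :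
      IARel q n α m N (tφ c * te i) (te ⟨sw c i.1, h'⟩ * tφ c)
  | phiXne (c : Fin (n - 1)) (i) (x : Fin n → ℤ) (h : i.1 (lo c) ≠ i.1 (hi c)) :
      IARel q n α m N ((tφ c * XmonOf tX tXi x - XmonOf tX tXi (rxC c x) * tφ c) * te i) 0
  | phiXeq (c : Fin (n - 1)) (i) (x : Fin n → ℤ) (h : i.1 (lo c) = i.1 (hi c)) :
      IARel q n α m N ((tφ c * XmonOf tX tXi x - XmonOf tX tXi (rxC c x) * tφ c) * te i)
        ((q • (1 : FreeAlgebra K (IAGen K n α)) - q⁻¹ • XmonOf tX tXi (-alC c)) *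
          (divMonOf tX tXi x (alC c) (x (hi c) - x (lo c)) * te i))
  | phicomm (c c' : Fin (n - 1)) (h : c.1 + 1 < c'.1) :
      IARel q n α m N (tφ c * tφ c') (tφ c' * tφ c)
  | phisqEq (c : Fin (n - 1)) (i) (h : i.1 (lo c) = i.1 (hi c)) :
      IARel q n α m N (tφ c * tφ c * te i) ((q + q⁻¹) • (tφ c * te i))
  | phisqNe (c : Fin (n - 1)) (i) (h : i.1 (lo c) ≠ i.1 (hi c))
      (Z : FreeAlgebra K (IAGen K n α))
      (hZ : RingQuot.mkAlgHom K (XARel n α m N)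
          ((1 - XmonOf tX tXi (alC c)) * ((1 - XmonOf tX tXi (-alC c)) * (Z * te i))) =
        RingQuot.mkAlgHom K (XARel n α m N) (te i)) :
      IARel q n α m N (tφ c * tφ c * te i) (te i + ((q - q⁻¹) ^ 2) • (Z * te i))
  | phibrEq (c c' : Fin (n - 1)) (hcc : c'.1 = c.1 + 1) (i)
      (h1 : i.1 (lo c) = i.1 (hi c)) (h2 : i.1 (hi c) = i.1 (hi c')) :
      IARel q n α m N ((tφ c * tφ c' * tφ c - tφ c' * tφ c * tφ c') * te i)
        ((tφ c - tφ c') * te i)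
  | phibrNe (c c' : Fin (n - 1)) (hcc : c'.1 = c.1 + 1) (i)
      (h1 : i.1 (lo c) = i.1 (hi c')) (h2 : i.1 (lo c) ≠ i.1 (hi c))
      (Z : FreeAlgebra K (IAGen K n α))
      (hZ : RingQuot.mkAlgHom K (XARel n α m N)
          ((1 - XmonOf tX tXi (-alC c)) ^ 2 * ((1 - XmonOf tX tXi (-alC c')) ^ 2 * (Z * te i))) =
        RingQuot.mkAlgHom K (XARel n α m N) (te i)) :
      IARel q n α m N ((tφ c * tφ c' * tφ c - tφ c' * tφ c * tφ c') * te i)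
        (((q - q⁻¹) ^ 2) • ((XmonOf tX tXi (-alC c') - XmonOf tX tXi (-alC c)) *
          ((q • (1 : FreeAlgebra K (IAGen K n α)) - q⁻¹ • XmonOf tX tXi (-alC c - alC c')) *
            (Z * te i))))
  | phibrEls (c c' : Fin (n - 1)) (hcc : c'.1 = c.1 + 1) (i) (h : i.1 (lo c) ≠ i.1 (hi c')) :
      IARel q n α m N ((tφ c * tφ c' * tφ c - tφ c' * tφ c * tφ c') * te i) 0

/-- The intermediary algebra `𝕀_{N,A}`. -/
abbrev IA (q : K) (n : ℕ) (α : Finset (Fin n → K)) (m : K →₀ ℕ) (N : ℕ) : Type :=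
  RingQuot (IARel q n α m N)

/-- Generators of the intermediary algebra `𝕀_N` of Definition 5.1. -/
inductive IBGen (K : Type) (n : ℕ) (β : Finset (Fin n → K)) : Type
  | phi0 : IBGen K n β
  | phi : Fin (n - 1) → IBGen K n β
  | X : Fin n → IBGen K n β
  | Xinv : Fin n → IBGen K n β
  | e : {x // x ∈ β} → IBGen K n β

def uφ0 {β : Finset (Fin n → K)} : FreeAlgebra K (IBGen K n β) := FreeAlgebra.ι K IBGen.phi0
def uφ {β : Finset (Fin n → K)} (c : Fin (n - 1)) : FreeAlgebra K (IBGen K n β) :=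
  FreeAlgebra.ι K (IBGen.phi c)
def uX {β : Finset (Fin n → K)} (k : Fin n) : FreeAlgebra K (IBGen K n β) :=
  FreeAlgebra.ι K (IBGen.X k)
def uXi {β : Finset (Fin n → K)} (k : Fin n) : FreeAlgebra K (IBGen K n β) :=
  FreeAlgebra.ι K (IBGen.Xinv k)
def ue {β : Finset (Fin n → K)} (i : {x // x ∈ β}) : FreeAlgebra K (IBGen K n β) :=
  FreeAlgebra.ι K (IBGen.e i)

/-- The "commutative part" of the relations of `𝕀_N`. -/
inductive XBRel (n : ℕ) (β : Finset (Fin n → K)) (m : K →₀ ℕ) (N : ℕ) :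
    FreeAlgebra K (IBGen K n β) → FreeAlgebra K (IBGen K n β) → Prop
  | Xcomm (k l : Fin n) : XBRel n β m N (uX k * uX l) (uX l * uX k)
  | Xunit (k : Fin n) : XBRel n β m N (uX k * uXi k) 1
  | Xunit' (k : Fin n) : XBRel n β m N (uXi k * uX k) 1
  | esum : XBRel n β m N (∑ i ∈ β.attach, ue i) 1
  | eidem (i) : XBRel n β m N (ue i * ue i) (ue i)
  | eorth (i j) (h : i ≠ j) : XBRel n β m N (ue i * ue j) 0
  | Xe (k : Fin n) (i) : XBRel n β m N (uX k * ue i) (ue i * uX k)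
  | cyc (i) (h0 : 0 < n) :
      XBRel n β m N ((uX ⟨0, h0⟩ - algebraMap K (FreeAlgebra K (IBGen K n β)) (i.1 ⟨0, h0⟩)) ^
        m (i.1 ⟨0, h0⟩) * ue i) 0
  | nil (i) (k : Fin n) (h : k.1 ≠ 0) :
      XBRel n β m N ((uX k - algebraMap K (FreeAlgebra K (IBGen K n β)) (i.1 k)) ^ N * ue i) 0

/-- Case conditions for the modified four-term braid relation of Definition 5.1. -/
def ib4c1 (i1 i2 : K) : Prop := i1 = i2 ∧ i1 ^ 2 = 1 ∧ i2 ^ 2 = 1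
def ib4c2 (i1 i2 : K) : Prop := i1 ≠ i2 ∧ i1 ^ 2 = 1 ∧ i2 ^ 2 = 1
def ib4c3 (i1 i2 : K) : Prop := i1 ≠ i2 ∧ i1 ^ 2 ≠ 1 ∧ i2 ^ 2 = 1
def ib4c4 (i1 i2 : K) : Prop := i1 ≠ i2 ∧ i1 ^ 2 ≠ 1 ∧ i1⁻¹ = i2

/-- `(Φ_0Φ_1Φ_0Φ_1 - Φ_1Φ_0Φ_1Φ_0) e(i)`. -/
def ufour {β : Finset (Fin n → K)} (h2 : 1 < n) (i : {x // x ∈ β}) :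
    FreeAlgebra K (IBGen K n β) :=
  (uφ0 * uφ ⟨0, by omega⟩ * uφ0 * uφ ⟨0, by omega⟩ -
    uφ ⟨0, by omega⟩ * uφ0 * uφ ⟨0, by omega⟩ * uφ0) * ue i

/-- Defining relations of the intermediary algebra `𝕀_N` (Definition 5.1).  Partial
inverses `(⋯)⁻¹e(i)` are handled by quantifying over all local inverses `Z` modulo the
commutative relations `XBRel`; for the elements `Z_b`, `Y_0`, `Y_1` we use the
cancelled expressions (Z-Y) of Remark 5.3. -/
inductive IBRel (p q : K) (n : ℕ) (β : Finset (Fin n → K)) (m : K →₀ ℕ) (N : ℕ) :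
    FreeAlgebra K (IBGen K n β) → FreeAlgebra K (IBGen K n β) → Prop
  | ofX {a b : FreeAlgebra K (IBGen K n β)} (h : XBRel n β m N a b) : IBRel p q n β m N a b
  | phiE (c : Fin (n - 1)) (i : {x // x ∈ β}) (h' : sw c i.1 ∈ β) :
      IBRel p q n β m N (uφ c * ue i) (ue ⟨sw c i.1, h'⟩ * uφ c)
  | phi0E (i : {x // x ∈ β}) (h0 : 0 < n) (h' : invMove h0 i.1 ∈ β) :
      IBRel p q n β m N (uφ0 * ue i) (ue ⟨invMove h0 i.1, h'⟩ * uφ0)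
  | phiXne (c : Fin (n - 1)) (i) (x : Fin n → ℤ) (h : i.1 (lo c) ≠ i.1 (hi c)) :
      IBRel p q n β m N ((uφ c * XmonOf uX uXi x - XmonOf uX uXi (rxC c x) * uφ c) * ue i) 0
  | phiXeq (c : Fin (n - 1)) (i) (x : Fin n → ℤ) (h : i.1 (lo c) = i.1 (hi c)) :
      IBRel p q n β m N ((uφ c * XmonOf uX uXi x - XmonOf uX uXi (rxC c x) * uφ c) * ue i)
        ((q • (1 : FreeAlgebra K (IBGen K n β)) - q⁻¹ • XmonOf uX uXi (-alC c)) *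
          (divMonOf uX uXi x (alC c) (x (hi c) - x (lo c)) * ue i))
  | phi0Xne (i) (x : Fin n → ℤ) (h0 : 0 < n) (h : (i.1 ⟨0, h0⟩)⁻¹ ≠ i.1 ⟨0, h0⟩) :
      IBRel p q n β m N ((uφ0 * XmonOf uX uXi x - XmonOf uX uXi (rx0 x) * uφ0) * ue i) 0
  | phi0Xeq (i) (x : Fin n → ℤ) (h0 : 0 < n) (h : (i.1 ⟨0, h0⟩)⁻¹ = i.1 ⟨0, h0⟩) :
      IBRel p q n β m N ((uφ0 * XmonOf uX uXi x - XmonOf uX uXi (rx0 x) * uφ0) * ue i)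
        ((p • (1 : FreeAlgebra K (IBGen K n β)) - p⁻¹ • XmonOf uX uXi mA0) *
          (divMonOf uX uXi x alB (x ⟨0, h0⟩) * ue i))
  | phicomm (c c' : Fin (n - 1)) (h : c.1 + 1 < c'.1) :
      IBRel p q n β m N (uφ c * uφ c') (uφ c' * uφ c)
  | phi0comm (c : Fin (n - 1)) (h : 1 ≤ c.1) : IBRel p q n β m N (uφ0 * uφ c) (uφ c * uφ0)
  | phisqEq (c : Fin (n - 1)) (i) (h : i.1 (lo c) = i.1 (hi c)) :
      IBRel p q n β m N (uφ c * uφ c * ue i) ((q + q⁻¹) • (uφ c * ue i))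
  | phisqNe (c : Fin (n - 1)) (i) (h : i.1 (lo c) ≠ i.1 (hi c))
      (Z : FreeAlgebra K (IBGen K n β))
      (hZ : RingQuot.mkAlgHom K (XBRel n β m N)
          ((1 - XmonOf uX uXi (alC c)) * ((1 - XmonOf uX uXi (-alC c)) * (Z * ue i))) =
        RingQuot.mkAlgHom K (XBRel n β m N) (ue i)) :
      IBRel p q n β m N (uφ c * uφ c * ue i)
        ((q • (1 : FreeAlgebra K (IBGen K n β)) - q⁻¹ • XmonOf uX uXi (alC c)) *
          ((q • (1 : FreeAlgebra K (IBGen K n β)) - q⁻¹ • XmonOf uX uXi (-alC c)) *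
            (Z * ue i)))
  | phi0sqEq (i) (h0 : 0 < n) (h : (i.1 ⟨0, h0⟩)⁻¹ = i.1 ⟨0, h0⟩) :
      IBRel p q n β m N (uφ0 * uφ0 * ue i) ((p + p⁻¹) • (uφ0 * ue i))
  | phi0sqNe (i) (h0 : 0 < n) (h : (i.1 ⟨0, h0⟩)⁻¹ ≠ i.1 ⟨0, h0⟩)
      (Z : FreeAlgebra K (IBGen K n β))
      (hZ : RingQuot.mkAlgHom K (XBRel n β m N)
          ((1 - XmonOf uX uXi alB) * ((1 - XmonOf uX uXi mA0) * (Z * ue i))) =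
        RingQuot.mkAlgHom K (XBRel n β m N) (ue i)) :
      IBRel p q n β m N (uφ0 * uφ0 * ue i)
        ((p • (1 : FreeAlgebra K (IBGen K n β)) - p⁻¹ • XmonOf uX uXi alB) *
          ((p • (1 : FreeAlgebra K (IBGen K n β)) - p⁻¹ • XmonOf uX uXi mA0) *
            (Z * ue i)))
  | phibrEq (c c' : Fin (n - 1)) (hcc : c'.1 = c.1 + 1) (i)
      (h1 : i.1 (lo c) = i.1 (hi c)) (h2 : i.1 (hi c) = i.1 (hi c')) :
      IBRel p q n β m N ((uφ c * uφ c' * uφ c - uφ c' * uφ c * uφ c') * ue i)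
        ((uφ c - uφ c') * ue i)
  | phibrNe (c c' : Fin (n - 1)) (hcc : c'.1 = c.1 + 1) (i)
      (h1 : i.1 (lo c) = i.1 (hi c')) (h2 : i.1 (lo c) ≠ i.1 (hi c))
      (Z : FreeAlgebra K (IBGen K n β))
      (hZ : RingQuot.mkAlgHom K (XBRel n β m N)
          ((1 - XmonOf uX uXi (-alC c)) ^ 2 * ((1 - XmonOf uX uXi (-alC c')) ^ 2 * (Z * ue i))) =
        RingQuot.mkAlgHom K (XBRel n β m N) (ue i)) :
      IBRel p q n β m N ((uφ c * uφ c' * uφ c - uφ c' * uφ c * uφ c') * ue i)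
        (((q - q⁻¹) ^ 2) • ((XmonOf uX uXi (-alC c') - XmonOf uX uXi (-alC c)) *
          ((q • (1 : FreeAlgebra K (IBGen K n β)) - q⁻¹ • XmonOf uX uXi (-alC c - alC c')) *
            (Z * ue i))))
  | phibrEls (c c' : Fin (n - 1)) (hcc : c'.1 = c.1 + 1) (i) (h : i.1 (lo c) ≠ i.1 (hi c')) :
      IBRel p q n β m N ((uφ c * uφ c' * uφ c - uφ c' * uφ c * uφ c') * ue i) 0
  | four1 (i) (h2 : 1 < n) (h : ib4c1 (i.1 ⟨0, Nat.lt_of_succ_lt h2⟩) (i.1 ⟨1, h2⟩)) :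
      IBRel p q n β m N (ufour h2 i)
        ((p * q⁻¹ + p⁻¹ * q) • ((uφ0 * uφ ⟨0, by omega⟩ - uφ ⟨0, by omega⟩ * uφ0) * ue i))
  | four2 (i) (h2 : 1 < n) (h : ib4c2 (i.1 ⟨0, Nat.lt_of_succ_lt h2⟩) (i.1 ⟨1, h2⟩))
      (Z : FreeAlgebra K (IBGen K n β))
      (hZ : RingQuot.mkAlgHom K (XBRel n β m N)
          ((1 - XmonOf uX uXi mA1) ^ 2 * ((1 - XmonOf uX uXi mR0A1) ^ 2 * (Z * ue i))) =
        RingQuot.mkAlgHom K (XBRel n β m N) (ue i)) :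
      IBRel p q n β m N (ufour h2 i)
        (-(((q - q⁻¹) ^ 2) •
          ((uφ0 * (1 - XmonOf uX uXi mA0) -
              (p • (1 : FreeAlgebra K (IBGen K n β)) - p⁻¹ • XmonOf uX uXi mA0)) *
            (XmonOf uX uXi mA1 *
              ((p • (1 : FreeAlgebra K (IBGen K n β)) - p⁻¹ • XmonOf uX uXi mR1A0) *
                (Z * ue i))))))
  | four3 (i) (h2 : 1 < n) (h : ib4c3 (i.1 ⟨0, Nat.lt_of_succ_lt h2⟩) (i.1 ⟨1, h2⟩))
      (Z : FreeAlgebra K (IBGen K n β))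
      (hZ : RingQuot.mkAlgHom K (XBRel n β m N)
          ((1 - XmonOf uX uXi mA1) ^ 2 * ((1 - XmonOf uX uXi mR0A1) ^ 2 * (Z * ue i))) =
        RingQuot.mkAlgHom K (XBRel n β m N) (ue i)) :
      IBRel p q n β m N (ufour h2 i)
        (-(((q - q⁻¹) ^ 2) •
          (uφ0 * ((1 - XmonOf uX uXi mA0) *
            (XmonOf uX uXi mA1 *
              ((p • (1 : FreeAlgebra K (IBGen K n β)) - p⁻¹ • XmonOf uX uXi mR1A0) *
                (Z * ue i)))))))
  | four4 (i) (h2 : 1 < n) (h : ib4c4 (i.1 ⟨0, Nat.lt_of_succ_lt h2⟩) (i.1 ⟨1, h2⟩))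
      (Z : FreeAlgebra K (IBGen K n β))
      (hZ : RingQuot.mkAlgHom K (XBRel n β m N)
          ((1 - XmonOf uX uXi mA0) ^ 2 * ((1 - XmonOf uX uXi mR1A0) ^ 2 * (Z * ue i))) =
        RingQuot.mkAlgHom K (XBRel n β m N) (ue i)) :
      IBRel p q n β m N (ufour h2 i)
        (((p - p⁻¹) ^ 2) •
          (uφ ⟨0, by omega⟩ * ((1 - XmonOf uX uXi mA1) *
            (XmonOf uX uXi mA0 * ((1 + XmonOf uX uXi mA1) *
              ((1 + XmonOf uX uXi mR0A1) *
                ((q • (1 : FreeAlgebra K (IBGen K n β)) - q⁻¹ • XmonOf uX uXi mR0A1) *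
                  (Z * ue i))))))))
  | four5 (i) (h2 : 1 < n)
      (h : ¬ib4c1 (i.1 ⟨0, Nat.lt_of_succ_lt h2⟩) (i.1 ⟨1, h2⟩) ∧
           ¬ib4c2 (i.1 ⟨0, Nat.lt_of_succ_lt h2⟩) (i.1 ⟨1, h2⟩) ∧
           ¬ib4c3 (i.1 ⟨0, Nat.lt_of_succ_lt h2⟩) (i.1 ⟨1, h2⟩) ∧
           ¬ib4c4 (i.1 ⟨0, Nat.lt_of_succ_lt h2⟩) (i.1 ⟨1, h2⟩)) :
      IBRel p q n β m N (ufour h2 i) 0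

/-- The intermediary algebra `𝕀_N` of Definition 5.1. -/
abbrev IB (p q : K) (n : ℕ) (β : Finset (Fin n → K)) (m : K →₀ ℕ) (N : ℕ) : Type :=
  RingQuot (IBRel p q n β m N)

/-! ### Formal power series helpers -/

/-- Composition `f ∘ g` of univariate power series (intended for `g` with zero constant
term, in which case this is the substitution of `g` into `f`). -/
def comp1 (f g : PowerSeries K) : PowerSeries K :=
  PowerSeries.mk fun d => ∑ k ∈ Finset.range (d + 1),
    PowerSeries.coeff (R := K) k f * PowerSeries.coeff (R := K) d (g ^ k)

/-- The power series `f(z) = z + z/(1-z)` used for the type B isomorphism. -/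
def fVV : PowerSeries K := PowerSeries.X + PowerSeries.X * (1 - PowerSeries.X)⁻¹

/-- The embedding `K[[z]] → K[[y_1,…,y_n]]`, `z ↦ y_a`. -/
def emb1 (a : Fin n) (h : PowerSeries K) : MvPowerSeries (Fin n) K :=
  fun d => if d.support ⊆ {a} then PowerSeries.coeff (R := K) (d a) h else 0

/-- The embedding `K[[z,z']] → K[[y_1,…,y_n]]`, `z ↦ y_a`, `z' ↦ y_b` (for `a ≠ b`). -/
def emb2 (a b : Fin n) (P : MvPowerSeries (Fin 2) K) : MvPowerSeries (Fin n) K :=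
  fun d => if d.support ⊆ {a, b} then
    MvPowerSeries.coeff (R := K) (Finsupp.single 0 (d a) + Finsupp.single 1 (d b)) P else 0

/-- The action of a permutation of the variables on `K[[y_1,…,y_n]]`. -/
def permPS (σ : Equiv.Perm (Fin n)) (P : MvPowerSeries (Fin n) K) :
    MvPowerSeries (Fin n) K :=
  fun d => MvPowerSeries.coeff (R := K) (Finsupp.equivMapDomain σ d) P

/-- The action of `r_0` (`y_1 ↦ -y_1`) on `K[[y_1,…,y_n]]`. -/
def negFirst (h0 : 0 < n) (P : MvPowerSeries (Fin n) K) : MvPowerSeries (Fin n) K :=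
  fun d => (-1 : K) ^ d ⟨0, h0⟩ * MvPowerSeries.coeff (R := K) d P

/-- `X_k(i) = i_k (1 - g(y_k))` as an element of `K[[y_1,…,y_n]]`. -/
def XofI (g : PowerSeries K) (i : Fin n → K) (k : Fin n) : MvPowerSeries (Fin n) K :=
  MvPowerSeries.C (σ := Fin n) (R := K) (i k) * (1 - emb1 k g)

/-- `X̄_1(i) = X_1(i)⁻¹ = i_1⁻¹ (1 - g(y_1))⁻¹`. -/
def XbarofI (g : PowerSeries K) (i : Fin n → K) (h0 : 0 < n) : MvPowerSeries (Fin n) K :=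
  MvPowerSeries.C (σ := Fin n) (R := K) (i ⟨0, h0⟩)⁻¹ * (1 - emb1 ⟨0, h0⟩ g)⁻¹

/-- The evaluated series `Q_k(i) ∈ K[[y_k, y_{k+1}]] ⊆ K[[y_1,…,y_n]]`. -/
def Qev {n : ℕ} (Q : Fin (n - 1) → K → K → MvPowerSeries (Fin 2) K)
    (c : Fin (n - 1)) (i : Fin n → K) : MvPowerSeries (Fin n) K :=
  emb2 (lo c) (hi c) (Q c (i (lo c)) (i (hi c)))

/-- Condition (★1). -/
def Star1 (q : K) (g : PowerSeries K) (S : Set K) (n : ℕ)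
    (Q : Fin (n - 1) → K → K → MvPowerSeries (Fin 2) K) : Prop :=
  ∀ i : Fin n → K, (∀ k, i k ∈ S) → ∀ c : Fin (n - 1), i (lo c) = i (hi c) →
    Qev Q c i * (emb1 (hi c) g - emb1 (lo c) g) =
      MvPowerSeries.C (σ := Fin n) (R := K) (i (lo c))⁻¹ *
        ((MvPowerSeries.C (σ := Fin n) (R := K) q⁻¹ * XofI g i (lo c) -
            MvPowerSeries.C (σ := Fin n) (R := K) q * XofI g i (hi c)) *
          (MvPowerSeries.X (hi c) - MvPowerSeries.X (lo c)))

/-- The product `{}^{r_k}Q_k(r_k(i)) ⋅ Q_k(i)`. -/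
def QQ2 {n : ℕ} (Q : Fin (n - 1) → K → K → MvPowerSeries (Fin 2) K)
    (c : Fin (n - 1)) (i : Fin n → K) : MvPowerSeries (Fin n) K :=
  permPS (Equiv.swap (lo c) (hi c)) (Qev Q c (sw c i)) * Qev Q c i

/-- `(X_k(i) - X_{k+1}(i))(X_{k+1}(i) - X_k(i))`. -/
def DD2 (g : PowerSeries K) (i : Fin n → K) (c : Fin (n - 1)) : MvPowerSeries (Fin n) K :=
  (XofI g i (lo c) - XofI g i (hi c)) * (XofI g i (hi c) - XofI g i (lo c))

/-- `(qX_k(i) - q⁻¹X_{k+1}(i))(qX_{k+1}(i) - q⁻¹X_k(i))`. -/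
def NN2 (q : K) (g : PowerSeries K) (i : Fin n → K) (c : Fin (n - 1)) :
    MvPowerSeries (Fin n) K :=
  (MvPowerSeries.C (σ := Fin n) (R := K) q * XofI g i (lo c) -
      MvPowerSeries.C (σ := Fin n) (R := K) q⁻¹ * XofI g i (hi c)) *
    (MvPowerSeries.C (σ := Fin n) (R := K) q * XofI g i (hi c) -
      MvPowerSeries.C (σ := Fin n) (R := K) q⁻¹ * XofI g i (lo c))

/-- Condition (★2). -/
def Star2 (q : K) (g : PowerSeries K) (S : Set K) (n : ℕ)
    (Q : Fin (n - 1) → K → K → MvPowerSeries (Fin 2) K) : Prop :=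
  ∀ i : Fin n → K, (∀ k, i k ∈ S) → ∀ c : Fin (n - 1),
    (qnon q (i (lo c)) (i (hi c)) → QQ2 Q c i * DD2 g i c = NN2 q g i c) ∧
    (qbak q (i (lo c)) (i (hi c)) →
      QQ2 Q c i * ((MvPowerSeries.X (hi c) - MvPowerSeries.X (lo c)) * DD2 g i c) =
        NN2 q g i c) ∧
    (qarr q (i (lo c)) (i (hi c)) →
      QQ2 Q c i * ((MvPowerSeries.X (lo c) - MvPowerSeries.X (hi c)) * DD2 g i c) =
        NN2 q g i c) ∧
    (qdbl q (i (lo c)) (i (hi c)) →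
      QQ2 Q c i * ((MvPowerSeries.X (hi c) - MvPowerSeries.X (lo c)) *
        ((MvPowerSeries.X (lo c) - MvPowerSeries.X (hi c)) * DD2 g i c)) = NN2 q g i c)

/-- Condition (★3). -/
def Star3 (S : Set K) (n : ℕ)
    (Q : Fin (n - 1) → K → K → MvPowerSeries (Fin 2) K) : Prop :=
  ∀ i : Fin n → K, (∀ k, i k ∈ S) → ∀ c c' : Fin (n - 1), c'.1 = c.1 + 1 →
    permPS (Equiv.swap (lo c) (hi c)) (Qev Q c' (sw c' (sw c i))) =
      permPS (Equiv.swap (lo c') (hi c')) (Qev Q c (sw c (sw c' i)))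

/-- Condition (★4). -/
def Star4 (p : K) (g : PowerSeries K) (S : Set K) (n : ℕ) (Q0 : K → PowerSeries K) : Prop :=
  ∀ i : Fin n → K, (∀ k, i k ∈ S) → ∀ h0 : 0 < n, (i ⟨0, h0⟩)⁻¹ = i ⟨0, h0⟩ →
    emb1 ⟨0, h0⟩ (Q0 (i ⟨0, h0⟩)) =
      MvPowerSeries.C (σ := Fin n) (R := K) (i ⟨0, h0⟩)⁻¹ *
        (MvPowerSeries.C (σ := Fin n) (R := K) p⁻¹ * XbarofI g i h0 -
          MvPowerSeries.C (σ := Fin n) (R := K) p * XofI g i ⟨0, h0⟩)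

/-- The product `{}^{r_0}Q_0(r_0(i)) ⋅ Q_0(i)`. -/
def QQ0 {n : ℕ} (Q0 : K → PowerSeries K) (h0 : 0 < n) (i : Fin n → K) :
    MvPowerSeries (Fin n) K :=
  negFirst h0 (emb1 ⟨0, h0⟩ (Q0 (i ⟨0, h0⟩)⁻¹)) * emb1 ⟨0, h0⟩ (Q0 (i ⟨0, h0⟩))

/-- `(X̄_1(i) - X_1(i))(X_1(i) - X̄_1(i))`. -/
def DD0 (g : PowerSeries K) (h0 : 0 < n) (i : Fin n → K) : MvPowerSeries (Fin n) K :=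
  (XbarofI g i h0 - XofI g i ⟨0, h0⟩) * (XofI g i ⟨0, h0⟩ - XbarofI g i h0)

/-- `(pX̄_1(i) - p⁻¹X_1(i))(pX_1(i) - p⁻¹X̄_1(i))`. -/
def NN0 (p : K) (g : PowerSeries K) (h0 : 0 < n) (i : Fin n → K) :
    MvPowerSeries (Fin n) K :=
  (MvPowerSeries.C (σ := Fin n) (R := K) p * XbarofI g i h0 -
      MvPowerSeries.C (σ := Fin n) (R := K) p⁻¹ * XofI g i ⟨0, h0⟩) *
    (MvPowerSeries.C (σ := Fin n) (R := K) p * XofI g i ⟨0, h0⟩ -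
      MvPowerSeries.C (σ := Fin n) (R := K) p⁻¹ * XbarofI g i h0)

/-- Condition (★5). -/
def Star5 (p : K) (g : PowerSeries K) (S : Set K) (n : ℕ) (Q0 : K → PowerSeries K) : Prop :=
  ∀ i : Fin n → K, (∀ k, i k ∈ S) → ∀ h0 : 0 < n,
    (pnon p (i ⟨0, h0⟩) → QQ0 Q0 h0 i * DD0 g h0 i = NN0 p g h0 i) ∧
    (parr p (i ⟨0, h0⟩) →
      QQ0 Q0 h0 i * (MvPowerSeries.X ⟨0, h0⟩ * DD0 g h0 i) = NN0 p g h0 i) ∧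
    (pbak p (i ⟨0, h0⟩) →
      QQ0 Q0 h0 i * (-MvPowerSeries.X ⟨0, h0⟩ * DD0 g h0 i) = NN0 p g h0 i) ∧
    (pdbl p (i ⟨0, h0⟩) →
      QQ0 Q0 h0 i * (-(MvPowerSeries.X ⟨0, h0⟩ * MvPowerSeries.X ⟨0, h0⟩) * DD0 g h0 i) =
        NN0 p g h0 i)

/-- Condition (★6). -/
def Star6 (S : Set K) (n : ℕ) (Q0 : K → PowerSeries K)
    (Q : Fin (n - 1) → K → K → MvPowerSeries (Fin 2) K) : Prop :=
  ∀ i : Fin n → K, (∀ k, i k ∈ S) → ∀ h2 : 1 < n,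
    (permPS (Equiv.swap ⟨0, Nat.lt_of_succ_lt h2⟩ ⟨1, h2⟩)
        (negFirst (Nat.lt_of_succ_lt h2)
          (permPS (Equiv.swap ⟨0, Nat.lt_of_succ_lt h2⟩ ⟨1, h2⟩)
            (emb1 ⟨0, Nat.lt_of_succ_lt h2⟩ (Q0 (i ⟨0, Nat.lt_of_succ_lt h2⟩))))) =
      emb1 ⟨0, Nat.lt_of_succ_lt h2⟩ (Q0 (i ⟨0, Nat.lt_of_succ_lt h2⟩))) ∧
    (negFirst (Nat.lt_of_succ_lt h2)
        (permPS (Equiv.swap ⟨0, Nat.lt_of_succ_lt h2⟩ ⟨1, h2⟩)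
          (negFirst (Nat.lt_of_succ_lt h2)
            (Qev Q ⟨0, by omega⟩
              (invMove (Nat.lt_of_succ_lt h2)
                (sw ⟨0, by omega⟩ (invMove (Nat.lt_of_succ_lt h2) i)))))) =
      Qev Q ⟨0, by omega⟩ i)

/-! ### Dimension vectors -/

/-- The dimension vector attached to a tuple: `dimvec i s = #{k : i_k ∈ {s, s⁻¹}}`. -/
def dimvec (i : Fin n → K) : K → ℕ := fun s =>
  (Finset.univ.filter fun k => i k = s ∨ i k = s⁻¹).card

end PdAW

end

/-!
Fix `i` and work in the corner ring `e(i) V e(i)`, whose identity is `e(i)`. By induction on `k`,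
`y_k e(i)` is nilpotent there for every `i`; as the `e(i)` sum to `1`, `y_k` is nilpotent.

For `y_1` this is the cyclotomic relation. Suppose `y_b` is nilpotent in every corner. If
`i_b ≠ i_{b+1}`, then `ψ_b` intertwines `y_b e(r_b i)` with `y_{b+1} ψ_b e(r_b i)`, so
`y_{b+1}^N ψ_b² e(i) = y_{b+1}^N ψ_b e(r_b i) ψ_b = 0`. Since `ψ_b² e(i)` is `e(i)` times `1`,
`±(y_{b+1} - y_b)` or `-(y_{b+1} - y_b)²`, this leaves a power of `y_{b+1}` modulo the
nilpotent `y_b`. If `i_b = i_{b+1}`, then `φ = ψ_b e(i)`, `x = y_{b+1} e(i)`, `w = y_b e(i)`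
satisfy the nil-Hecke relations `φ w = x φ - 1` and `φ² = 0`. Hence
`φ w^k = x^k φ - S_k` with `S_k = ∑_{a < k} x^a w^{k-1-a}`, and `w^N = 0` gives `S_N = x^N φ`,
which squares to zero; so `x^N = S_N (x - w)` is nilpotent.
-/

open Finset

section Nilpotent

variable {R : Type*} [Ring R] {x w : R}

theorem Commute.isNilpotent_of_pow_mul_sub_pow_eq_zero (hxw : Commute x w) (hw : IsNilpotent w)
    {N d : ℕ} (h : x ^ N * (x - w) ^ d = 0) : IsNilpotent x := by
  have hxy : Commute x (x - w) := (Commute.refl x).sub_right hxw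
  have hyw : Commute (x - w) w := hxw.sub_left (Commute.refl w)
  have hprod : IsNilpotent (x * (x - w)) := ⟨N + d, by
    rw [hxy.mul_pow, pow_add, add_comm, pow_add, mul_assoc, ← mul_assoc (x ^ d),
      (hxy.pow_pow d d).eq, mul_assoc ((x - w) ^ d), ← mul_assoc, h, zero_mul]⟩
  have hsq : x ^ 2 = x * (x - w) + x * w := by rw [mul_sub, sub_add_cancel, sq]
  refine IsNilpotent.of_pow (m := 2) ?_
  rw [hsq]
  exact Commute.isNilpotent_add
    (((Commute.refl x).mul_right hxw).mul_left (hxy.symm.mul_right hyw))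
    hprod (hxw.isNilpotent_mul_left hw)

theorem isNilpotent_of_nilHecke {φ : R} (hxw : Commute x w) (hφw : φ * w = x * φ - 1)
    (hφφ : φ * φ = 0) {N : ℕ} (hw : w ^ N = 0) : IsNilpotent x := by
  set S : ℕ → R := fun k => ∑ i ∈ range k, x ^ i * w ^ (k - 1 - i)
  have hSx : ∀ k, Commute (S k) x := fun k =>
    Commute.sum_left _ _ _ fun i _ => ((Commute.refl x).pow_left i).mul_left (hxw.symm.pow_left _)
  have hSw : ∀ k, Commute (S k) w := fun k =>
    Commute.sum_left _ _ _ fun i _ => (hxw.pow_left i).mul_left ((Commute.refl w).pow_left _)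
  have hφwk : ∀ k, φ * w ^ k = x ^ k * φ - S k := by
    intro k
    induction k with
    | zero => simp [S]
    | succ k ih =>
      have hS1 : S (k + 1) = x ^ k + w * S k := by
        simp only [S, Nat.add_sub_cancel]; exact hxw.geom_sum₂_succ_eq
      rw [pow_succ, ← mul_assoc, ih, sub_mul, mul_assoc, hφw, mul_sub, ← mul_assoc, ← pow_succ,
        mul_one, hS1, (hSw k).eq]
      abel
  have hSN : S N = x ^ N * φ := by
    have := hφwk N
    rwa [hw, mul_zero, eq_comm, sub_eq_zero, eq_comm] at this
  have hSS : S N * S N = 0 := by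
    nth_rewrite 2 [hSN]
    rw [← mul_assoc, ((hSx N).pow_right N).eq, hSN, mul_assoc, mul_assoc, hφφ, mul_zero,
      mul_zero]
  have hxN : x ^ N = S N * (x - w) := by rw [hxw.geom_sum₂_mul, hw, sub_zero]
  refine IsNilpotent.of_pow (m := N) ?_
  rw [hxN]
  exact ((hSx N).sub_right (hSw N)).isNilpotent_mul_right ⟨2, by rw [sq, hSS]⟩

theorem mul_pow_mul_eq_pow_mul_mul {ψ u v e : R} (hue : Commute u e)
    (h : ψ * u * e = v * ψ * e) (k : ℕ) : ψ * u ^ k * e = v ^ k * ψ * e := by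
  induction k with
  | zero => simp
  | succ k ih =>
    calc ψ * u ^ (k + 1) * e = ψ * u * e * u ^ k := by
          simp only [pow_succ', mul_assoc]; rw [(hue.pow_left k).eq]
      _ = v * (ψ * u ^ k * e) := by
          rw [h]; simp only [mul_assoc]; rw [(hue.pow_left k).eq]
      _ = v ^ (k + 1) * ψ * e := by rw [ih]; simp only [pow_succ', mul_assoc]

theorem isNilpotent_of_exists_pow_mul_eq_zero_of_sum_eq_one {ι : Type*} {s : Finset ι} {e : ι → R}
    (hsum : ∑ i ∈ s, e i = 1) (h : ∀ i ∈ s, ∃ N, x ^ N * e i = 0) : IsNilpotent x := by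
  choose! N hN using h
  refine ⟨s.sup N, ?_⟩
  rw [← mul_one (x ^ _), ← hsum, mul_sum]
  exact sum_eq_zero fun i hi => pow_mul_eq_zero_of_le (le_sup hi) (hN i hi)

end Nilpotent

section Corner

variable {A : Type*} [Ring A] {e : A}

def IsIdempotentElem.cornerHom (he : IsIdempotentElem e) :
    Subring.centralizer {e} →+* he.Corner where
  toFun a := ⟨a * e, a, by
    have : e * a = a * e := Subring.mem_centralizer_iff.mp a.2 e rfl
    simp [this, mul_assoc, he.eq]⟩
  map_one' := Subtype.ext (one_mul e)
  map_mul' a b := Subtype.ext <| by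
    have : e * b = b * e := Subring.mem_centralizer_iff.mp b.2 e rfl
    show a * b * e = a * e * (b * e)
    rw [mul_assoc, mul_assoc, ← mul_assoc e, this, mul_assoc, he.eq]
  map_zero' := Subtype.ext (zero_mul e)
  map_add' a b := Subtype.ext (add_mul (a : A) b e)

theorem Commute.mem_centralizer_singleton {a : A} (h : Commute a e) :
    a ∈ Subring.centralizer {e} :=
  Subring.mem_centralizer_iff.mpr fun _ hg => (Set.mem_singleton_iff.mp hg) ▸ h.symm.eq

theorem IsIdempotentElem.cornerHom_eq_iff (he : IsIdempotentElem e)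
    {a b : Subring.centralizer {e}} : he.cornerHom a = he.cornerHom b ↔ (a : A) * e = b * e :=
  Subtype.ext_iff

theorem IsIdempotentElem.isNilpotent_cornerHom_iff (he : IsIdempotentElem e)
    {a : Subring.centralizer {e}} : IsNilpotent (he.cornerHom a) ↔ ∃ N, (a : A) ^ N * e = 0 := by
  simp only [IsNilpotent, ← map_pow, ← map_zero he.cornerHom, he.cornerHom_eq_iff,
    SubmonoidClass.coe_pow, ZeroMemClass.coe_zero, zero_mul]

theorem IsIdempotentElem.exists_pow_mul_eq_zero_of_pow_mul_sub_pow (he : IsIdempotentElem e)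
    {u v : A} (huv : Commute u v) (hue : Commute u e) (hve : Commute v e) {M N d : ℕ}
    (hu : u ^ M * e = 0) (h : v ^ N * (v - u) ^ d * e = 0) : ∃ L, v ^ L * e = 0 := by
  let x : Subring.centralizer {e} := ⟨v, hve.mem_centralizer_singleton⟩
  let w : Subring.centralizer {e} := ⟨u, hue.mem_centralizer_singleton⟩
  have hxw : Commute (he.cornerHom x) (he.cornerHom w) :=
    (show Commute x w from Subtype.ext huv.eq.symm).map he.cornerHom
  have hw : IsNilpotent (he.cornerHom w) := he.isNilpotent_cornerHom_iff.mpr ⟨M, hu⟩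
  have hd := he.cornerHom_eq_iff (a := x ^ N * (x - w) ^ d) (b := 0)
  rw [map_mul, map_pow, map_pow, map_sub, map_zero] at hd
  exact he.isNilpotent_cornerHom_iff.mp
    (hxw.isNilpotent_of_pow_mul_sub_pow_eq_zero hw (hd.mpr (by simpa using h)))

theorem IsIdempotentElem.exists_pow_mul_eq_zero_of_nilHecke (he : IsIdempotentElem e)
    {u v ψ : A} (huv : Commute u v) (hue : Commute u e) (hve : Commute v e) {N : ℕ}
    (hψe : Commute ψ e) (hψu : ψ * u * e = v * ψ * e - e) (hψψ : ψ * ψ * e = 0)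
    (hu : u ^ N * e = 0) : ∃ L, v ^ L * e = 0 := by
  let φ : Subring.centralizer {e} := ⟨ψ, hψe.mem_centralizer_singleton⟩
  let x : Subring.centralizer {e} := ⟨v, hve.mem_centralizer_singleton⟩
  let w : Subring.centralizer {e} := ⟨u, hue.mem_centralizer_singleton⟩
  have hxw : Commute (he.cornerHom x) (he.cornerHom w) :=
    (show Commute x w from Subtype.ext huv.eq.symm).map he.cornerHom
  have hφw := he.cornerHom_eq_iff (a := φ * w) (b := x * φ - 1)
  rw [map_mul, map_sub, map_mul, map_one] at hφw
  have hφφ := he.cornerHom_eq_iff (a := φ * φ) (b := 0)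
  rw [map_mul, map_zero] at hφφ
  have hw := he.cornerHom_eq_iff (a := w ^ N) (b := 0)
  rw [map_pow, map_zero] at hw
  exact he.isNilpotent_cornerHom_iff.mp (isNilpotent_of_nilHecke hxw
    (hφw.mpr (by simpa [sub_mul] using hψu)) (hφφ.mpr (by simpa using hψψ))
    (hw.mpr (by simpa using hu)))

end Corner

namespace PdAW

variable {K : Type} {n : ℕ}

theorem sw_apply_lo (c : Fin (n - 1)) (i : Fin n → K) : sw c i (lo c) = i (hi c) := by
  simp [sw, swapMove, lo, hi]

theorem sw_apply_hi (c : Fin (n - 1)) (i : Fin n → K) : sw c i (hi c) = i (lo c) := by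
  simp [sw, swapMove, lo, hi]

theorem sw_eq_self {c : Fin (n - 1)} {i : Fin n → K} (h : i (lo c) = i (hi c)) : sw c i = i := by
  funext x
  show i (Equiv.swap (lo c) (hi c) x) = i x
  rcases eq_or_ne x (lo c) with rfl | hx1
  · rw [Equiv.swap_apply_left, h]
  rcases eq_or_ne x (hi c) with rfl | hx2
  · rw [Equiv.swap_apply_right, h]
  · rw [Equiv.swap_apply_of_ne_of_ne hx1 hx2]

variable [Field K]

theorem IsBOrbit.sw_mem {β : Finset (Fin n → K)} (hβ : IsBOrbit (β : Set (Fin n → K)))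
    {i : Fin n → K} (hi : i ∈ β) (c : Fin (n - 1)) : sw c i ∈ β := by
  obtain ⟨i₀, -, hset⟩ := hβ
  have hmem : ∀ j, j ∈ β ↔ inOrbitB i₀ j := fun j => Set.ext_iff.mp hset j
  exact (hmem _).mpr (((hmem i).mp hi).tail (Or.inl ⟨c.1, fin_lt c, rfl⟩))

section VV

variable {p q : K} {β : Finset (Fin n → K)} {m : K →₀ ℕ}

local notation "π" => RingQuot.mkAlgHom K (VRel p q n β m)

theorem commute_vy_vy (j k : Fin n) : Commute (π (vy j)) (π (vy k)) := by
  have h := RingQuot.mkAlgHom_rel K (VRel.ycomm (p := p) (q := q) (β := β) (m := m) j k)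
  rwa [map_mul, map_mul] at h

theorem commute_vy_ve (k : Fin n) (i : {x // x ∈ β}) : Commute (π (vy k)) (π (ve i)) := by
  have h := RingQuot.mkAlgHom_rel K (VRel.ye (p := p) (q := q) (m := m) k i)
  rwa [map_mul, map_mul] at h

theorem isIdempotentElem_ve (i : {x // x ∈ β}) : IsIdempotentElem (π (ve i)) := by
  have h := RingQuot.mkAlgHom_rel K (VRel.eidem (p := p) (q := q) (m := m) i)
  rwa [map_mul] at h

theorem sum_ve : ∑ i ∈ β.attach, π (ve i) = 1 := by
  simpa using RingQuot.mkAlgHom_rel K (VRel.esum (p := p) (q := q) (β := β) (m := m))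

theorem vy_zero_pow_mul_ve (i : {x // x ∈ β}) (h0 : 0 < n) :
    π (vy ⟨0, h0⟩) ^ m (i.1 ⟨0, h0⟩) * π (ve i) = 0 := by
  have h := RingQuot.mkAlgHom_rel K (VRel.cyc (p := p) (q := q) (m := m) i h0)
  rwa [map_mul, map_pow, map_zero] at h

theorem vψ_mul_ve (c : Fin (n - 1)) (i : {x // x ∈ β}) (h : sw c i.1 ∈ β) :
    π (vψ c) * π (ve i) = π (ve ⟨sw c i.1, h⟩) * π (vψ c) := by
  have h := RingQuot.mkAlgHom_rel K (VRel.psiE (p := p) (q := q) (m := m) c i h)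
  rwa [map_mul, map_mul] at h

theorem vψ_mul_vy_lo_mul_ve_of_ne {c : Fin (n - 1)} {i : {x // x ∈ β}}
    (h : i.1 (lo c) ≠ i.1 (hi c)) :
    π (vψ c) * π (vy (lo c)) * π (ve i) = π (vy (hi c)) * π (vψ c) * π (ve i) := by
  have h := RingQuot.mkAlgHom_rel K (VRel.psiyO (p := p) (q := q) (m := m) c i (lo c) (.inl h))
  rwa [Equiv.swap_apply_left, map_mul, map_sub, map_mul, map_mul, map_zero, sub_mul,
    sub_eq_zero] at h

theorem vψ_mul_vy_lo_mul_ve_of_eq {c : Fin (n - 1)} {i : {x // x ∈ β}}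
    (h : i.1 (lo c) = i.1 (hi c)) :
    π (vψ c) * π (vy (lo c)) * π (ve i) = π (vy (hi c)) * π (vψ c) * π (ve i) - π (ve i) := by
  have h := RingQuot.mkAlgHom_rel K (VRel.psiyB (p := p) (q := q) (m := m) c i h)
  rw [map_mul, map_sub, map_mul, map_mul, map_neg, sub_mul, sub_eq_iff_eq_add] at h
  rw [h, neg_add_eq_sub]

theorem vψ_mul_vψ_mul_ve_of_eq {c : Fin (n - 1)} {i : {x // x ∈ β}}
    (h : i.1 (lo c) = i.1 (hi c)) : π (vψ c) * π (vψ c) * π (ve i) = 0 := by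
  have h := RingQuot.mkAlgHom_rel K (VRel.sqEq (p := p) (q := q) (m := m) c i h)
  rwa [map_mul, map_mul, map_zero] at h

theorem vψ_mul_vψ_mul_ve_of_qnon {c : Fin (n - 1)} {i : {x // x ∈ β}}
    (h : qnon q (i.1 (lo c)) (i.1 (hi c))) : π (vψ c) * π (vψ c) * π (ve i) = π (ve i) := by
  have h := RingQuot.mkAlgHom_rel K (VRel.sqNon (p := p) (m := m) c i h)
  rwa [map_mul, map_mul] at h

theorem vψ_mul_vψ_mul_ve_of_qarr {c : Fin (n - 1)} {i : {x // x ∈ β}}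
    (h : qarr q (i.1 (lo c)) (i.1 (hi c))) :
    π (vψ c) * π (vψ c) * π (ve i) = (π (vy (hi c)) - π (vy (lo c))) * π (ve i) := by
  have h := RingQuot.mkAlgHom_rel K (VRel.sqArr (p := p) (m := m) c i h)
  simpa only [map_mul, map_sub] using h

theorem vψ_mul_vψ_mul_ve_of_qbak {c : Fin (n - 1)} {i : {x // x ∈ β}}
    (h : qbak q (i.1 (lo c)) (i.1 (hi c))) :
    π (vψ c) * π (vψ c) * π (ve i) = (π (vy (lo c)) - π (vy (hi c))) * π (ve i) := by
  have h := RingQuot.mkAlgHom_rel K (VRel.sqBak (p := p) (m := m) c i h)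
  simpa only [map_mul, map_sub] using h

theorem vψ_mul_vψ_mul_ve_of_qdbl {c : Fin (n - 1)} {i : {x // x ∈ β}}
    (h : qdbl q (i.1 (lo c)) (i.1 (hi c))) :
    π (vψ c) * π (vψ c) * π (ve i) =
      (π (vy (hi c)) - π (vy (lo c))) * (π (vy (lo c)) - π (vy (hi c))) * π (ve i) := by
  have h := RingQuot.mkAlgHom_rel K (VRel.sqDbl (p := p) (m := m) c i h)
  simpa only [map_mul, map_sub, mul_assoc] using h

theorem exists_pow_vy_hi_mul_ve_eq_zero_of_eq {c : Fin (n - 1)} {i : {x // x ∈ β}}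
    (h : i.1 (lo c) = i.1 (hi c)) {N : ℕ} (hN : π (vy (lo c)) ^ N * π (ve i) = 0) :
    ∃ L, π (vy (hi c)) ^ L * π (ve i) = 0 := by
  have hψe : Commute (π (vψ c)) (π (ve i)) := by
    have hsw : sw c i.1 ∈ β := (sw_eq_self h).symm ▸ i.2
    have := vψ_mul_ve (p := p) (q := q) (m := m) c i hsw
    rwa [show (⟨sw c i.1, hsw⟩ : {x // x ∈ β}) = i from Subtype.ext (sw_eq_self h)] at this
  exact (isIdempotentElem_ve i).exists_pow_mul_eq_zero_of_nilHecke (commute_vy_vy _ _)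
    (commute_vy_ve _ _) (commute_vy_ve _ _) hψe (vψ_mul_vy_lo_mul_ve_of_eq h)
    (vψ_mul_vψ_mul_ve_of_eq h) hN

theorem exists_pow_vy_hi_mul_ve_eq_zero_of_ne (hβ : IsBOrbit (β : Set (Fin n → K)))
    {c : Fin (n - 1)} {i : {x // x ∈ β}} (h : i.1 (lo c) ≠ i.1 (hi c))
    (hlo : ∀ j, ∃ N, π (vy (lo c)) ^ N * π (ve j) = 0) :
    ∃ L, π (vy (hi c)) ^ L * π (ve i) = 0 := by
  let i' : {x // x ∈ β} := ⟨sw c i.1, hβ.sw_mem i.2 c⟩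
  have h' : i'.1 (lo c) ≠ i'.1 (hi c) := by
    simpa only [i', sw_apply_lo, sw_apply_hi] using h.symm
  obtain ⟨N, hN⟩ := hlo i'
  have hψN : π (vy (hi c)) ^ N * π (vψ c) * π (ve i') = 0 := by
    rw [← mul_pow_mul_eq_pow_mul_mul (commute_vy_ve _ _) (vψ_mul_vy_lo_mul_ve_of_ne h'),
      mul_assoc, hN, mul_zero]
  have hsq : π (vy (hi c)) ^ N * (π (vψ c) * π (vψ c) * π (ve i)) = 0 := by
    rw [mul_assoc (π (vψ c)), vψ_mul_ve c i i'.2, ← mul_assoc, ← mul_assoc, hψN, zero_mul]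
  obtain ⟨M, hM⟩ := hlo i
  suffices ∃ d, π (vy (hi c)) ^ N * (π (vy (hi c)) - π (vy (lo c))) ^ d * π (ve i) = 0 by
    obtain ⟨d, hd⟩ := this
    exact (isIdempotentElem_ve i).exists_pow_mul_eq_zero_of_pow_mul_sub_pow (commute_vy_vy _ _)
      (commute_vy_ve _ _) (commute_vy_ve _ _) hM hd
  by_cases harr : i.1 (hi c) = q ^ 2 * i.1 (lo c) <;>
    by_cases hbak : i.1 (hi c) = (q ^ 2)⁻¹ * i.1 (lo c)
  · rw [vψ_mul_vψ_mul_ve_of_qdbl ⟨harr, hbak⟩] at hsq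
    refine ⟨2, ?_⟩
    rw [← neg_eq_zero, ← hsq, sq]
    simp only [mul_sub, sub_mul, mul_assoc]
    abel
  · rw [vψ_mul_vψ_mul_ve_of_qarr ⟨harr, hbak⟩] at hsq
    exact ⟨1, by rwa [pow_one, mul_assoc]⟩
  · rw [vψ_mul_vψ_mul_ve_of_qbak ⟨hbak, harr⟩] at hsq
    refine ⟨1, ?_⟩
    rw [← neg_eq_zero, ← hsq, pow_one]
    simp only [mul_sub, sub_mul, mul_assoc]
    abel
  · rw [vψ_mul_vψ_mul_ve_of_qnon ⟨h, harr, hbak⟩] at hsq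
    exact ⟨0, by rwa [pow_zero, mul_one]⟩

theorem exists_pow_vy_mul_ve_eq_zero (hβ : IsBOrbit (β : Set (Fin n → K))) (k : Fin n)
    (i : {x // x ∈ β}) : ∃ N, π (vy k) ^ N * π (ve i) = 0 := by
  obtain ⟨r, hr⟩ := k
  induction r generalizing i with
  | zero => exact ⟨_, vy_zero_pow_mul_ve i hr⟩
  | succ r ih =>
    let c : Fin (n - 1) := ⟨r, by omega⟩
    have hlo : ∀ j, ∃ N, π (vy (lo c)) ^ N * π (ve j) = 0 := fun j => ih j (by omega)
    by_cases h : i.1 (lo c) = i.1 (hi c)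
    · obtain ⟨N, hN⟩ := hlo i
      exact exists_pow_vy_hi_mul_ve_eq_zero_of_eq h hN
    · exact exists_pow_vy_hi_mul_ve_eq_zero_of_ne hβ h hlo

end VV

theorem statement7_general {K : Type} [Field K] (p q : K) (m : K →₀ ℕ) (n : ℕ)
    (β : Finset (Fin n → K)) (hβ : IsBOrbit (↑β : Set (Fin n → K))) :
    ∀ k : Fin n, IsNilpotent (RingQuot.mkAlgHom K (VRel p q n β m) (vy k)) := fun k =>
  isNilpotent_of_exists_pow_mul_eq_zero_of_sum_eq_one sum_ve fun i _ => exists_pow_vy_mul_ve_eq_zero hβ k i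

/-- In the cyclotomic generalized Varagnolo–Vasserot algebra `V^β_{λ,m}`,
the elements `y_1, …, y_n` are nilpotent. -/
theorem statement7 {K : Type} [Field K] (p q : K)
    (hp : p ≠ 0) (hq : q ≠ 0) (hp2 : p ^ 2 ≠ 1) (hq2 : q ^ 2 ≠ 1) (hchar : (2 : K) ≠ 0)
    {l : ℕ} (lam : Fin l → K) (hlam : ∀ a, lam a ≠ 0)
    (hdisj : ∀ a b : Fin l, a ≠ b → Iset q (lam a) ∩ Iset q (lam b) = ∅)
    (m : K →₀ ℕ) (hm : ∀ x ∈ m.support, x ∈ Sset q lam)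
    (n : ℕ) (hn : 0 < n)
    (β : Finset (Fin n → K)) (hβ : IsBOrbit (↑β : Set (Fin n → K)))
    (hβS : ∀ i ∈ β, ∀ k, i k ∈ Sset q lam) :
    ∀ k : Fin n, IsNilpotent (RingQuot.mkAlgHom K (VRel p q n β m) (vy k)) :=
  statement7_general p q m n β hβ

end PdAW
end

section
/- Let M be a module over the affine Hecke algebra Ĥ(A_n), let I ⊂ K∖{0} be a finite set, and suppose the element P(X_1) := ∏_{λ∈I}(X_1 − λ)^{m(λ)} acts as 0 on M for some integers m(λ) > 0. Then for every k ∈ {1,…,n} there exist integers m_k(μ) ≥ 0 such that the element Q_k(X_k) := ∏_{μ∈I_k}(X_k − μ)^{m_k(μ)} acts as 0 on M, where I_k := {λq^{2l} : λ ∈ I, 0 ≤ |l| ≤ k−1}. Consequently, as a module over the commutative subalgebra K[X_1^{±1},…,X_n^{±1}], M decomposes as the direct sum over i = (i_1,…,i_n) ∈ I_1 × ⋯ × I_n of the common generalized eigenspaces M_i := {v ∈ M : for every k = 1,…,n, (X_k − i_k)^N v = 0 for some N > 0}. -/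
/-!
Formalization of definitions from:
L. Poulain d'Andecy and R. Walker, "Affine Hecke algebras and generalisations
of quiver Hecke algebras for type B".

Presented algebras are realized as `RingQuot` quotients of free algebras.
-/

open scoped BigOperators Classical

/-!
Put `a = q - q⁻¹`. For `S = X_k`, `T = X_{k+1}` and `g = g_k`, the relations `g² = a g + 1`,
`g S g = T` make `Φ = (T - S) g - a T` an intertwiner: `Φ S = T Φ` and
`Φ² = -(S - q² T)(S - q⁻² T)`. So if `P(S)` kills `M`, so does `P(T) Φ² = Φ P(S) Φ`.
In the commutative algebra `K[X_1, …, X_n]`, modulo `(S - q² T)(S - q⁻² T)` the product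
`(T - q⁻² μ)(T - q² μ)` is a multiple of `S - μ`. As `P(S)` and `P(T)(S - q² T)(S - q⁻² T)` kill
`M`, so does `P(T) ∏_μ (T - q⁻² μ)(T - q² μ)`, and induction on `k` gives the roots in `I_k`.

For the decomposition, a Bézout identity for the pairwise coprime factors `(X - μ)^{m μ}`
yields elements `π_μ ∈ K[X_k]` with `∑ π_μ = 1` and `(X_k - μ)^{m μ} π_μ = 0` on `M`.
The products `∏_k π_{k, i_k}` project `M` onto the `M_i`; uniqueness holds because
`(X - μ)^a` and `(X - ν)^b` are coprime for `μ ≠ ν`.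
-/

namespace PdAW

open Polynomial

section Intertwiner

variable {K A M : Type*} [Field K] [Ring A] [Algebra K A] [AddCommGroup M] [Module A M]
  {q : K} {g S T : A}

def heckeIntertwiner (q : K) (g S T : A) : A := (T - S) * g - (q - q⁻¹) • T

lemma mul_eq_sub_of_hecke (hg : g * g = (q - q⁻¹) • g + 1) (hgSg : g * S * g = T) :
    g * S = T * g - (q - q⁻¹) • T := by
  have hginv : g * (g - (q - q⁻¹) • 1) = 1 := by
    rw [mul_sub, hg, mul_smul_comm, mul_one, add_sub_cancel_left]
  calc g * S = g * S * (g * (g - (q - q⁻¹) • 1)) := by rw [hginv, mul_one]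
    _ = T * g - (q - q⁻¹) • T := by rw [← mul_assoc, hgSg, mul_sub, mul_smul_comm, mul_one]

lemma mul_eq_add_of_hecke (hg : g * g = (q - q⁻¹) • g + 1) (hgSg : g * S * g = T) :
    g * T = S * g + (q - q⁻¹) • T := by
  calc g * T = g * g * (S * g) := by rw [← hgSg]; noncomm_ring
    _ = S * g + (q - q⁻¹) • T := by
      rw [hg, add_mul, one_mul, smul_mul_assoc, ← mul_assoc, hgSg, add_comm]

lemma heckeIntertwiner_mul (hg : g * g = (q - q⁻¹) • g + 1) (hgSg : g * S * g = T)
    (hST : Commute S T) : heckeIntertwiner q g S T * S = T * heckeIntertwiner q g S T := by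
  calc heckeIntertwiner q g S T * S = (T - S) * (g * S) - (q - q⁻¹) • (T * S) := by
        simp only [heckeIntertwiner, sub_mul, mul_assoc, smul_mul_assoc]
    _ = T * heckeIntertwiner q g S T := by
        simp only [heckeIntertwiner, mul_eq_sub_of_hecke hg hgSg, mul_sub, sub_mul,
          mul_smul_comm, ← mul_assoc, hST.eq]
        module

lemma heckeIntertwiner_mul_self (hq : q ≠ 0) (hg : g * g = (q - q⁻¹) • g + 1)
    (hgSg : g * S * g = T) (hST : Commute S T) :
    heckeIntertwiner q g S T * heckeIntertwiner q g S T =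
      -((S - q ^ 2 • T) * (S - (q ^ 2)⁻¹ • T)) := by
  have hgΦ : g * heckeIntertwiner q g S T =
      (q - q⁻¹) • (T * g) + S - T - (q - q⁻¹) ^ 2 • T := by
    rw [heckeIntertwiner, mul_sub, ← mul_assoc, mul_sub, mul_eq_add_of_hecke hg hgSg,
      mul_eq_sub_of_hecke hg hgSg, mul_smul_comm, mul_eq_add_of_hecke hg hgSg]
    simp only [sub_mul, add_mul, smul_mul_assoc, mul_assoc, hg, mul_add, mul_one, mul_smul_comm]
    module
  have hqq : q * q⁻¹ = 1 := mul_inv_cancel₀ hq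
  calc heckeIntertwiner q g S T * heckeIntertwiner q g S T
      = (T - S) * (g * heckeIntertwiner q g S T) -
          (q - q⁻¹) • (T * heckeIntertwiner q g S T) := by
        rw [heckeIntertwiner]; simp only [sub_mul, mul_assoc, smul_mul_assoc]
    _ = _ := by
        rw [hgΦ]
        simp only [heckeIntertwiner, mul_sub, sub_mul, mul_add, mul_smul_comm,
          smul_mul_assoc, smul_sub, ← mul_assoc, hST.eq]
        linear_combination (norm := module)
          (-2 : K) • hqq • (T * S) + (q * q⁻¹ + 1) • hqq • (T * T)

lemma mul_aeval_of_mul_eq {Φ : A} (h : Φ * S = T * Φ) (p : K[X]) :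
    Φ * aeval S p = aeval T p * Φ := by
  induction p using Polynomial.induction_on' with
  | add p r hp hr => rw [map_add, map_add, mul_add, add_mul, hp, hr]
  | monomial k a =>
    simp only [aeval_monomial]
    rw [← mul_assoc, ← Algebra.commutes, mul_assoc, (SemiconjBy.pow_right h k).eq, mul_assoc]

lemma aeval_mul_mem_annihilator (hq : q ≠ 0) (hg : g * g = (q - q⁻¹) • g + 1)
    (hgSg : g * S * g = T) (hST : Commute S T) {p : K[X]}
    (hp : aeval S p ∈ Module.annihilator A M) :
    aeval T p * ((S - q ^ 2 • T) * (S - (q ^ 2)⁻¹ • T)) ∈ Module.annihilator A M := by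
  rw [← neg_mem_iff, ← mul_neg, ← heckeIntertwiner_mul_self hq hg hgSg hST, ← mul_assoc,
    ← mul_aeval_of_mul_eq (heckeIntertwiner_mul hg hgSg hST)]
  exact Ideal.mul_mem_right _ _ (Ideal.mul_mem_left _ _ hp)

end Intertwiner

section Quotient

variable {K R : Type*} [Field K] [CommRing R] [Algebra K R]

lemma multiset_prod_mem_of_sub_mul_sub_mem (I : Ideal R) {a : K} (ha : a ≠ 0) {s t : R}
    (hu : (s - a • t) * (s - a⁻¹ • t) ∈ I) {L : Multiset K}
    (hs : (L.map fun μ => s - algebraMap K R μ).prod ∈ I) :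
    (L.map fun μ => (t - algebraMap K R (a⁻¹ * μ)) * (t - algebraMap K R (a * μ))).prod ∈ I := by
  rw [← Ideal.Quotient.eq_zero_iff_mem] at hu hs ⊢
  have haa : algebraMap K R a * algebraMap K R a⁻¹ = 1 := by
    rw [← map_mul, mul_inv_cancel₀ ha, map_one]
  -- modulo `(s - a t)(s - a⁻¹ t)`, each factor is divisible by `s - μ`
  have factor (μ : K) : (t - algebraMap K R (a⁻¹ * μ)) * (t - algebraMap K R (a * μ)) =
      (s - a • t) * (s - a⁻¹ • t) + (s - algebraMap K R μ) *
        ((algebraMap K R a + algebraMap K R a⁻¹) * t - s - algebraMap K R μ) := by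
    simp only [map_mul, Algebra.smul_def]
    linear_combination (algebraMap K R μ ^ 2 - t ^ 2) * haa
  simp only [map_multiset_prod, Multiset.map_map, Function.comp_def] at hs ⊢
  simp only [factor]
  simp only [map_add, hu, zero_add, map_mul, Multiset.prod_map_mul, hs, zero_mul]

end Quotient

section Decomposition

variable {K R M : Type*} [Field K] [CommRing R] [Algebra K R] [AddCommGroup M] [Module R M]

lemma eq_zero_of_pow_smul_eq_zero {x : R} {μ ν : K} (hμν : μ ≠ ν) {a b : ℕ} {w : M}
    (hμ : (x - algebraMap K R μ) ^ a • w = 0) (hν : (x - algebraMap K R ν) ^ b • w = 0) :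
    w = 0 := by
  obtain ⟨u, v, huv⟩ := (isCoprime_X_sub_C_of_isUnit_sub (sub_ne_zero.mpr hμν).isUnit).pow
    (m := a) (n := b)
  have h := congrArg (fun p => aeval x p • w) huv
  simp only [map_add, map_mul, map_pow, map_sub, aeval_X, aeval_C, add_smul, mul_smul, hμ, hν,
    smul_zero, add_zero, map_one, one_smul] at h
  exact h.symm

variable (M) in
structure IsSpectralProjectors (x : R) (T : Finset K) (m : K → ℕ) (π : K → R) : Prop where
  eq_zero_of_notMem : ∀ μ ∉ T, π μ = 0
  sum_smul : ∀ w : M, (∑ μ ∈ T, π μ) • w = w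
  pow_mul_mem_annihilator : ∀ μ, (x - algebraMap K R μ) ^ m μ * π μ ∈ Module.annihilator R M

lemma exists_isSpectralProjectors (x : R) (T : Finset K) (m : K → ℕ)
    (hF : ∏ μ ∈ T, (x - algebraMap K R μ) ^ m μ ∈ Module.annihilator R M) :
    ∃ π, IsSpectralProjectors M x T m π := by
  classical
  rcases T.eq_empty_or_nonempty with rfl | hT
  · have hM (w : M) : w = 0 := by simpa using Module.mem_annihilator.mp hF w
    exact ⟨0, ⟨fun _ _ => rfl, fun w => (hM _).trans (hM w).symm, fun _ => by simp⟩⟩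
  set f : K → K[X] := fun μ => (X - C μ) ^ m μ
  obtain ⟨H, hH⟩ := (exists_sum_eq_one_iff_pairwise_coprime hT (s := f)).mpr
    fun μ ν hμν => (isCoprime_X_sub_C_of_isUnit_sub
      (sub_ne_zero.mpr fun h => hμν (Subtype.ext h)).isUnit).pow
  have haeval_f (μ : K) : aeval x (f μ) = (x - algebraMap K R μ) ^ m μ := by simp [f]
  refine ⟨fun μ => if μ ∈ T then aeval x (H μ * ∏ ν ∈ T \ {μ}, f ν) else 0,
    ⟨fun μ hμ => if_neg hμ, fun w => ?_, fun μ => ?_⟩⟩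
  · rw [Finset.sum_congr rfl fun μ hμ => if_pos hμ, ← map_sum, hH, map_one, one_smul]
  · split_ifs with hμ
    · rw [← haeval_f, ← map_mul, mul_left_comm,
        ← Finset.prod_eq_mul_prod_sdiff_singleton_of_mem hμ, map_mul, map_prod]
      simp only [haeval_f]
      exact Ideal.mul_mem_left _ _ hF
    · rw [mul_zero]
      exact zero_mem _

namespace IsSpectralProjectors

variable {x : R} {T : Finset K} {m : K → ℕ} {π : K → R}

lemma smul_eq_zero (hπ : IsSpectralProjectors M x T m π) {μ ν : K} (hμν : μ ≠ ν) {N : ℕ}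
    {w : M} (hw : (x - algebraMap K R μ) ^ N • w = 0) : π ν • w = 0 :=
  eq_zero_of_pow_smul_eq_zero hμν
    (by rw [smul_comm ((x - algebraMap K R μ) ^ N) (π ν) w, hw, smul_zero])
    (by rw [← mul_smul]; exact Module.mem_annihilator.mp (hπ.pow_mul_mem_annihilator ν) w)

lemma smul_eq_self (hπ : IsSpectralProjectors M x T m π) {μ : K} (hμ : μ ∈ T) {N : ℕ}
    {w : M} (hw : (x - algebraMap K R μ) ^ N • w = 0) : π μ • w = w := by
  conv_rhs => rw [← hπ.sum_smul w]
  rw [Finset.sum_smul, Finset.sum_eq_single μ (fun ν _ hνμ => hπ.smul_eq_zero (Ne.symm hνμ) hw)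
    (fun h => absurd hμ h)]

end IsSpectralProjectors

lemma prod_smul_eq_self {ι : Type*} {s : Finset ι} {r : ι → R} {w : M}
    (h : ∀ k ∈ s, r k • w = w) : (∏ k ∈ s, r k) • w = w :=
  Finset.prod_induction _ (fun r : R => r • w = w) (fun a b ha hb => by rw [mul_smul, hb, ha])
    (one_smul R w) h

variable {ι : Type*} [Fintype ι] [DecidableEq ι] {x : ι → R} {T : ι → Finset K}
  {m : ι → K → ℕ} {π : ι → K → R}

lemma prod_smul_sum_eq (hπ : ∀ k, IsSpectralProjectors M (x k) (T k) (m k) (π k))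
    {c : (ι → K) → M} (hc : ∀ i k, ∃ N : ℕ, (x k - algebraMap K R (i k)) ^ N • c i = 0)
    {i : ι → K} (hi : i ∈ Fintype.piFinset T) :
    (∏ k, π k (i k)) • ∑ j ∈ Fintype.piFinset T, c j = c i := by
  rw [Finset.smul_sum, Finset.sum_eq_single i (fun j _ hji => ?_) (fun h => absurd hi h)]
  · refine prod_smul_eq_self fun k _ => ?_
    obtain ⟨N, hN⟩ := hc i k
    exact (hπ k).smul_eq_self (Fintype.mem_piFinset.mp hi k) hN
  · obtain ⟨k, hk⟩ := Function.ne_iff.mp hji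
    obtain ⟨N, hN⟩ := hc j k
    rw [← Finset.mul_prod_erase _ _ (Finset.mem_univ k), mul_comm, mul_smul,
      (hπ k).smul_eq_zero hk hN, smul_zero]

theorem existsUnique_sum_eq_of_prod_mem_annihilator (x : ι → R) (T : ι → Finset K)
    (m : ι → K → ℕ)
    (hF : ∀ k, ∏ μ ∈ T k, (x k - algebraMap K R μ) ^ m k μ ∈ Module.annihilator R M) (v : M) :
    ∃! c : (ι → K) → M,
      (∀ i k, ∃ N : ℕ, 0 < N ∧ (x k - algebraMap K R (i k)) ^ N • c i = 0) ∧
      (∀ i, i ∉ Fintype.piFinset T → c i = 0) ∧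
      ∑ i ∈ Fintype.piFinset T, c i = v := by
  choose π hπ using fun k =>
    exists_isSpectralProjectors (M := M) (x k) (T k) (m k) (hF k)
  have he0 (i : ι → K) (hi : i ∉ Fintype.piFinset T) : ∏ k, π k (i k) = 0 := by
    obtain ⟨k, hk⟩ := not_forall.mp (mt Fintype.mem_piFinset.mpr hi)
    exact Finset.prod_eq_zero (Finset.mem_univ k) ((hπ k).eq_zero_of_notMem _ hk)
  refine ⟨fun i => (∏ k, π k (i k)) • v,
    ⟨fun i k => ⟨m k (i k) + 1, Nat.succ_pos _, ?_⟩, fun i hi => ?_, ?_⟩, ?_⟩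
  · have h := Ideal.mul_mem_right (∏ l ∈ Finset.univ.erase k, π l (i l)) _
      (Ideal.mul_mem_left _ (x k - algebraMap K R (i k)) ((hπ k).pow_mul_mem_annihilator (i k)))
    rw [← mul_smul, ← Finset.mul_prod_erase _ _ (Finset.mem_univ k)]
    exact Module.mem_annihilator.mp (by convert h using 1; ring) v
  · simp only [he0 i hi, zero_smul]
  · rw [← Finset.sum_smul, ← Finset.prod_univ_sum]
    exact prod_smul_eq_self fun k _ => (hπ k).sum_smul v
  · rintro c ⟨hc_eigen, hc_zero, hc_sum⟩
    funext i
    by_cases hi : i ∈ Fintype.piFinset T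
    · rw [← hc_sum, prod_smul_sum_eq hπ (fun i k => (hc_eigen i k).imp fun _ h => h.2) hi]
    · rw [hc_zero i hi, he0 i hi, zero_smul]

end Decomposition

section Subalgebra

open scoped IsMulCommutative

variable {K A M : Type} [Field K] [Ring A] [Algebra K A] [AddCommGroup M] [Module A M]

lemma mem_annihilator_subalgebra_iff {S : Subalgebra K A} {r : S} :
    r ∈ Module.annihilator S M ↔ (r : A) ∈ Module.annihilator A M := by
  simp only [Module.mem_annihilator, Subalgebra.smul_def]

lemma polyProd_eq_aeval (x : A) (J : Finset K) (m : K → ℕ) :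
    polyProd x J m = aeval x (∏ μ ∈ J, (X - C μ) ^ m μ) := by
  classical
  induction J using Finset.induction_on with
  | empty => exact (Finset.noncommProd_empty _ _).trans (by simp)
  | insert μ J hμ ih =>
    refine (Finset.noncommProd_insert_of_notMem _ _ _ _ hμ).trans ?_
    rw [Finset.prod_insert hμ, map_mul, ← polyProd, ih, map_pow, map_sub, aeval_X, aeval_C]

lemma polyProd_coe {S : Subalgebra K A} [IsMulCommutative S]
    (x : S) (J : Finset K) (m : K → ℕ) :
    polyProd (x : A) J m = ((∏ μ ∈ J, (x - algebraMap K S μ) ^ m μ : S) : A) := by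
  rw [polyProd_eq_aeval, ← aeval_subalgebra_coe]
  simp

end Subalgebra

section Hecke

open scoped IsMulCommutative

variable {K : Type} [Field K] {q : K} {n : ℕ}

def heckeG (q : K) (n : ℕ) (c : Fin (n - 1)) : HeckeA q n :=
  RingQuot.mkAlgHom K (HARel q n) (ag c)

lemma heckeG_mul_self (c : Fin (n - 1)) :
    heckeG q n c * heckeG q n c = (q - q⁻¹) • heckeG q n c + 1 := by
  rw [heckeG, ← map_mul, RingQuot.mkAlgHom_rel K (HARel.quad c), map_add, map_smul, map_one]

lemma heckeG_mul_mul_heckeG (c : Fin (n - 1)) :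
    heckeG q n c * RingQuot.mkAlgHom K (HARel q n) (aX (lo c)) * heckeG q n c =
      RingQuot.mkAlgHom K (HARel q n) (aX (hi c)) := by
  rw [heckeG, ← map_mul, ← map_mul]
  exact RingQuot.mkAlgHom_rel K (HARel.gXg c)

lemma commute_mkAlgHom_aX (k l : Fin n) :
    Commute (RingQuot.mkAlgHom K (HARel q n) (aX k))
      (RingQuot.mkAlgHom K (HARel q n) (aX l)) := by
  rw [Commute, SemiconjBy, ← map_mul, ← map_mul]
  exact RingQuot.mkAlgHom_rel K (HARel.Xcomm k l)

variable (q n) in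
def heckeXAlgebra : Subalgebra K (HeckeA q n) :=
  Algebra.adjoin K (Set.range fun k => RingQuot.mkAlgHom K (HARel q n) (aX k))

instance : IsMulCommutative (heckeXAlgebra q n) :=
  Algebra.isMulCommutative_adjoin K (by
    rintro _ ⟨k, rfl⟩ _ ⟨l, rfl⟩
    exact commute_mkAlgHom_aX k l)

variable (q n) in
def heckeX (k : Fin n) : heckeXAlgebra q n :=
  ⟨RingQuot.mkAlgHom K (HARel q n) (aX k), Algebra.subset_adjoin ⟨k, rfl⟩⟩

variable {M : Type} [AddCommGroup M] [Module (HeckeA q n) M]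

lemma multiset_prod_heckeX_hi_mem_annihilator (hq : q ≠ 0) (c : Fin (n - 1)) {L : Multiset K}
    (hL : (L.map fun μ => heckeX q n (lo c) - algebraMap K _ μ).prod ∈
      Module.annihilator (heckeXAlgebra q n) M) :
    ((L + L.map ((q ^ 2)⁻¹ * ·) + L.map (q ^ 2 * ·)).map
      fun μ => heckeX q n (hi c) - algebraMap K _ μ).prod ∈
        Module.annihilator (heckeXAlgebra q n) M := by
  set s := heckeX q n (lo c)
  set t := heckeX q n (hi c)
  set J := Module.annihilator (heckeXAlgebra q n) M
  set p : K[X] := (L.map fun μ => X - C μ).prod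
  have hp (x : heckeXAlgebra q n) :
      aeval x p = (L.map fun μ => x - algebraMap K _ μ).prod := by
    simp [p, map_multiset_prod, Multiset.map_map]
  have hu : aeval t p * ((s - q ^ 2 • t) * (s - (q ^ 2)⁻¹ • t)) ∈ J := by
    have hs : aeval (s : HeckeA q n) p ∈ Module.annihilator (HeckeA q n) M := by
      rw [← aeval_subalgebra_coe, ← mem_annihilator_subalgebra_iff, hp]
      exact hL
    have hmem := aeval_mul_mem_annihilator hq (heckeG_mul_self c) (heckeG_mul_mul_heckeG c)
      (commute_mkAlgHom_aX _ _) hs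
    rw [mem_annihilator_subalgebra_iff]
    simp only [Subalgebra.coe_mul, Subalgebra.coe_sub, Subalgebra.coe_smul, aeval_subalgebra_coe]
    exact hmem
  have hcolon := multiset_prod_mem_of_sub_mul_sub_mem (R := heckeXAlgebra q n)
    (J.colon {aeval t p}) (pow_ne_zero 2 hq)
    (by rw [Submodule.mem_colon_singleton, smul_eq_mul, mul_comm]; exact hu)
    (by rw [Submodule.mem_colon_singleton, smul_eq_mul]; exact Ideal.mul_mem_right _ _ hL)
  rw [Submodule.mem_colon_singleton, smul_eq_mul] at hcolon
  convert hcolon using 1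
  rw [hp, Multiset.map_add, Multiset.map_add, Multiset.prod_add, Multiset.prod_add,
    Multiset.map_map, Multiset.map_map, mul_assoc, ← Multiset.prod_map_mul, mul_comm]
  rfl

lemma polyProd_smul_eq_prod_smul (k : Fin n) (J : Finset K) (m : K → ℕ) (v : M) :
    polyProd (RingQuot.mkAlgHom K (HARel q n) (aX k)) J m • v =
      (∏ μ ∈ J, (heckeX q n k - algebraMap K _ μ) ^ m μ) • v := by
  rw [Subalgebra.smul_def, ← polyProd_coe]
  rfl

lemma heckeX_sub_algebraMap_pow_smul (k : Fin n) (μ : K) (N : ℕ) (w : M) :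
    (heckeX q n k - algebraMap K _ μ) ^ N • w =
      (RingQuot.mkAlgHom K (HARel q n) (aX k) - algebraMap K (HeckeA q n) μ) ^ N • w :=
  rfl

-- `qShifts q I k` is the paper's `I_{k+1}`, matching the 0-based `X k = X_{k+1}`.
variable (q) in
noncomputable def qShifts (I : Finset K) (k : ℕ) : Finset K :=
  (I ×ˢ Finset.Icc (-(k : ℤ)) (k : ℤ)).image fun pr => pr.1 * q ^ (2 * pr.2)

lemma mem_qShifts_zero {I : Finset K} {μ : K} (hμ : μ ∈ I) : μ ∈ qShifts q I 0 :=
  Finset.mem_image.mpr ⟨(μ, 0), by simp [hμ], by simp⟩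

lemma mem_qShifts_succ (hq : q ≠ 0) {I : Finset K} {k : ℕ} {μ : K} (hμ : μ ∈ qShifts q I k) :
    μ ∈ qShifts q I (k + 1) ∧ (q ^ 2)⁻¹ * μ ∈ qShifts q I (k + 1) ∧
      q ^ 2 * μ ∈ qShifts q I (k + 1) := by
  simp only [qShifts, Finset.mem_image, Finset.mem_product, Finset.mem_Icc, Prod.exists] at hμ ⊢
  obtain ⟨l, t, ⟨hl, ht⟩, rfl⟩ := hμ
  push_cast
  refine ⟨⟨l, t, ⟨hl, by omega⟩, rfl⟩, ⟨l, t - 1, ⟨hl, by omega⟩, ?_⟩,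
    ⟨l, t + 1, ⟨hl, by omega⟩, ?_⟩⟩
  · rw [mul_sub, mul_one, zpow_sub₀ hq, zpow_ofNat]; ring
  · rw [mul_add, mul_one, zpow_add₀ hq, zpow_ofNat]; ring

theorem exists_multiset_prod_mem_annihilator (hq : q ≠ 0) (h0 : 0 < n) (I : Finset K)
    (mm : K → ℕ)
    (hP : ∀ v : M, polyProd (RingQuot.mkAlgHom K (HARel q n) (aX ⟨0, h0⟩)) I mm • v = 0) :
    ∀ (k : ℕ) (hk : k < n), ∃ L : Multiset K, (∀ μ ∈ L, μ ∈ qShifts q I k) ∧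
      (L.map fun μ => heckeX q n ⟨k, hk⟩ - algebraMap K _ μ).prod ∈
        Module.annihilator (heckeXAlgebra q n) M
  | 0, _ => by
    refine ⟨I.val.bind fun μ => Multiset.replicate (mm μ) μ, fun μ hμ => ?_, ?_⟩
    · obtain ⟨ν, hν, hμν⟩ := Multiset.mem_bind.mp hμ
      rw [Multiset.eq_of_mem_replicate hμν]
      exact mem_qShifts_zero hν
    · rw [Multiset.map_bind, Multiset.prod_bind]
      simp only [Multiset.map_replicate, Multiset.prod_replicate]
      exact Module.mem_annihilator.mpr fun v =>
        (polyProd_smul_eq_prod_smul _ _ _ v).symm.trans (hP v)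
  | k + 1, hk => by
    obtain ⟨L, hLI, hL⟩ := exists_multiset_prod_mem_annihilator hq h0 I mm hP k (by omega)
    refine ⟨L + L.map ((q ^ 2)⁻¹ * ·) + L.map (q ^ 2 * ·), ?_,
      multiset_prod_heckeX_hi_mem_annihilator hq ⟨k, by omega⟩ hL⟩
    simp only [Multiset.mem_add, Multiset.mem_map]
    rintro μ ((hμ | ⟨ν, hν, rfl⟩) | ⟨ν, hν, rfl⟩)
    exacts [(mem_qShifts_succ hq (hLI μ hμ)).1, (mem_qShifts_succ hq (hLI ν hν)).2.1,
      (mem_qShifts_succ hq (hLI ν hν)).2.2]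

theorem exists_polyProd_qShifts_smul_eq_zero (hq : q ≠ 0) (h0 : 0 < n) (I : Finset K)
    (mm : K → ℕ)
    (hP : ∀ v : M, polyProd (RingQuot.mkAlgHom K (HARel q n) (aX ⟨0, h0⟩)) I mm • v = 0)
    (k : Fin n) :
    ∃ mk : K → ℕ, ∀ v : M,
      polyProd (RingQuot.mkAlgHom K (HARel q n) (aX k)) (qShifts q I k) mk • v = 0 := by
  obtain ⟨L, hLI, hL⟩ := exists_multiset_prod_mem_annihilator hq h0 I mm hP k k.2
  refine ⟨fun μ => L.count μ, fun v => ?_⟩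
  rw [polyProd_smul_eq_prod_smul]
  rw [Finset.prod_multiset_map_count] at hL
  refine Module.mem_annihilator.mp ?_ v
  rwa [← Finset.prod_subset (fun μ hμ => hLI μ (Multiset.mem_toFinset.mp hμ))
    fun μ _ hμ => by
      rw [Multiset.count_eq_zero.mpr (mt Multiset.mem_toFinset.mpr hμ), pow_zero]]

theorem existsUnique_sum_eq_of_polyProd_smul_eq_zero (T : Fin n → Finset K) (m : Fin n → K → ℕ)
    (hm : ∀ k, ∀ v : M, polyProd (RingQuot.mkAlgHom K (HARel q n) (aX k)) (T k) (m k) • v = 0)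
    (v : M) :
    ∃! c : (Fin n → K) → M,
      (∀ i k, ∃ N : ℕ, 0 < N ∧
        ((RingQuot.mkAlgHom K (HARel q n) (aX k) - algebraMap K (HeckeA q n) (i k)) ^ N) • c i =
          0) ∧
      (∀ i, i ∉ Fintype.piFinset T → c i = 0) ∧
      ∑ i ∈ Fintype.piFinset T, c i = v := by
  simpa only [heckeX_sub_algebraMap_pow_smul] using
    existsUnique_sum_eq_of_prod_mem_annihilator (heckeX q n) T m
      (fun k => Module.mem_annihilator.mpr fun w =>
        (polyProd_smul_eq_prod_smul _ _ _ w).symm.trans (hm k w)) v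

end Hecke

theorem statement8_general {K : Type} [Field K] (q : K) (hq : q ≠ 0)
    (n : ℕ) (h0 : 0 < n)
    (M : Type) [AddCommGroup M] [Module (HeckeA q n) M]
    (I : Finset K)
    (mm : K → ℕ)
    (hP : ∀ v : M,
      polyProd (RingQuot.mkAlgHom K (HARel q n) (aX ⟨0, h0⟩)) I mm • v = 0) :
    (∀ k : Fin n, ∃ mk : K → ℕ, ∀ v : M,
        polyProd (RingQuot.mkAlgHom K (HARel q n) (aX k))
          ((I ×ˢ Finset.Icc (-(k.1 : ℤ)) (k.1 : ℤ)).image fun pr => pr.1 * q ^ (2 * pr.2))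
          mk • v = 0) ∧
    (∀ v : M, ∃! cdec : (Fin n → K) → M,
      (∀ i : Fin n → K, ∀ k : Fin n, ∃ N : ℕ, 0 < N ∧
          ((RingQuot.mkAlgHom K (HARel q n) (aX k) -
            algebraMap K (HeckeA q n) (i k)) ^ N) • cdec i = 0) ∧
      (∀ i : Fin n → K, i ∉ (Fintype.piFinset fun k : Fin n =>
          (I ×ˢ Finset.Icc (-(k.1 : ℤ)) (k.1 : ℤ)).image fun pr => pr.1 * q ^ (2 * pr.2)) →
        cdec i = 0) ∧
      ∑ i ∈ (Fintype.piFinset fun k : Fin n =>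
          (I ×ˢ Finset.Icc (-(k.1 : ℤ)) (k.1 : ℤ)).image fun pr => pr.1 * q ^ (2 * pr.2)),
        cdec i = v) := by
  have hX := exists_polyProd_qShifts_smul_eq_zero hq h0 I mm hP
  refine ⟨hX, fun v => ?_⟩
  choose m hm using hX
  exact existsUnique_sum_eq_of_polyProd_smul_eq_zero (fun k => qShifts q I k) m hm v

/-- Proposition 3.1.  If `P(X_1) = ∏_{λ∈I}(X_1-λ)^{m(λ)}` acts as `0`
on an `Ĥ(A_n)`-module `M`, then each `X_k` is annihilated by a polynomial with roots in
`I_k = {λq^{2t} : λ ∈ I, |t| ≤ k-1}`, and `M` decomposes as the direct sum of the common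
generalized eigenspaces `M_i`, `i ∈ I_1 × ⋯ × I_n`. -/
theorem statement8 {K : Type} [Field K] (q : K) (hq : q ≠ 0) (hq2 : q ^ 2 ≠ 1)
    (n : ℕ) (h0 : 0 < n)
    (M : Type) [AddCommGroup M] [Module (HeckeA q n) M]
    (I : Finset K) (hI : ∀ lam ∈ I, lam ≠ 0)
    (mm : K → ℕ) (hmm : ∀ lam ∈ I, 0 < mm lam)
    (hP : ∀ v : M,
      polyProd (RingQuot.mkAlgHom K (HARel q n) (aX ⟨0, h0⟩)) I mm • v = 0) :
    (∀ k : Fin n, ∃ mk : K → ℕ, ∀ v : M,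
        polyProd (RingQuot.mkAlgHom K (HARel q n) (aX k))
          ((I ×ˢ Finset.Icc (-(k.1 : ℤ)) (k.1 : ℤ)).image fun pr => pr.1 * q ^ (2 * pr.2))
          mk • v = 0) ∧
    (∀ v : M, ∃! cdec : (Fin n → K) → M,
      (∀ i : Fin n → K, ∀ k : Fin n, ∃ N : ℕ, 0 < N ∧
          ((RingQuot.mkAlgHom K (HARel q n) (aX k) -
            algebraMap K (HeckeA q n) (i k)) ^ N) • cdec i = 0) ∧
      (∀ i : Fin n → K, i ∉ (Fintype.piFinset fun k : Fin n =>
          (I ×ˢ Finset.Icc (-(k.1 : ℤ)) (k.1 : ℤ)).image fun pr => pr.1 * q ^ (2 * pr.2)) →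
        cdec i = 0) ∧
      ∑ i ∈ (Fintype.piFinset fun k : Fin n =>
          (I ×ˢ Finset.Icc (-(k.1 : ℤ)) (k.1 : ℤ)).image fun pr => pr.1 * q ^ (2 * pr.2)),
        cdec i = v) :=
  statement8_general q hq n h0 M I mm hP

end PdAW
end
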